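/- arXiv:0910.2759 — 12 statements merged into one kernel-verified Lean document; each statement's English description precedes it below -/
import Mathlib

section
/- Let A be an abelian group and let a, b ∈ A such that {0, a, b, a+b} is a 4-element set. Then the set of all 3-element subsets Y of A with 0 ∉ Y such that {0} ∪ Y is a translate of {0,a,b,a+b} or a translate of -{0,a,b,a+b} equals {{a, b, a+b}, {-a, b, -a+b}, {a, -b, a-b}, {-a, -b, -a-b}}. -/
variable {A : Type*}

def orbHat [AddCommGroup A] (X : Set A) : Set (Set A) :=
  {Y | ∃ e : A, Y = (fun x => x + e) '' X ∨ Y = (fun x => -x + e) '' X}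

set_option maxHeartbeats 2000000 in
theorem stmt_1 [AddCommGroup A] (a b : A)
    (hcard : ({0, a, b, a + b} : Set A).ncard = 4) :
    {Y : Set A | Y.ncard = 3 ∧ (0 : A) ∉ Y ∧ insert (0 : A) Y ∈ orbHat ({0, a, b, a + b} : Set A)} =
      ({{a, b, a + b}, {-a, b, -a + b}, {a, -b, a - b}, {-a, -b, -a - b}} : Set (Set A)) := by
  -- basic distinctness facts
  have key : ∀ x y z : A, ({x, y, z} : Set A).ncard ≤ 3 := by
    intro x y z
    calc ({x, y, z} : Set A).ncard ≤ ({y, z} : Set A).ncard + 1 := Set.ncard_insert_le _ _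
    _ ≤ ({z} : Set A).ncard + 1 + 1 := by gcongr; exact Set.ncard_insert_le _ _
    _ ≤ 3 := by simp
  have ha : a ≠ 0 := by
    rintro rfl; rw [show ({0, 0, b, 0 + b} : Set A) = {0, 0, b} by simp] at hcard
    have := key 0 0 b; omega
  have hb : b ≠ 0 := by
    rintro rfl
    rw [show ({0, a, 0, a + 0} : Set A) = {0, a, a} by ext; simp; try tauto] at hcard
    have := key 0 a a; omega
  have hab : a + b ≠ 0 := by
    intro h
    rw [show ({0, a, b, a + b} : Set A) = {0, a, b} by rw [h]; ext; simp; try tauto] at hcard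
    have := key 0 a b; omega
  have hne : a ≠ b := by
    rintro rfl
    rw [show ({0, a, a, a + a} : Set A) = {0, a, a + a} by ext; simp; try tauto] at hcard
    have := key 0 a (a + a); omega
  have ha' : -a ≠ 0 := neg_ne_zero.mpr ha
  have hb' : -b ≠ 0 := neg_ne_zero.mpr hb
  have hab' : -(a + b) ≠ 0 := neg_ne_zero.mpr hab
  have hne' : a - b ≠ 0 := sub_ne_zero.mpr hne
  have hne'' : b - a ≠ 0 := sub_ne_zero.mpr (Ne.symm hne)
  have NE : ∀ x y : A, x - y ≠ 0 → x ≠ y := fun x y h hxy => h (sub_eq_zero_of_eq hxy)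
  obtain ⟨d12, d13, d21, d22, d23, d31, d32, d33, d41, d42, d43,
      n0a, n0b, n0ab, n0na, n0nb, n0nab, n0amb, n0nanb⟩ :
      (a ≠ a + b) ∧ (b ≠ a + b) ∧ (-a ≠ b) ∧ (-a ≠ -a + b) ∧ (b ≠ -a + b) ∧
      (a ≠ -b) ∧ (a ≠ a - b) ∧ (-b ≠ a - b) ∧ (-a ≠ -b) ∧ (-a ≠ -a - b) ∧ (-b ≠ -a - b) ∧
      ((0 : A) ≠ a) ∧ ((0 : A) ≠ b) ∧ ((0 : A) ≠ a + b) ∧ ((0 : A) ≠ -a) ∧ ((0 : A) ≠ -b) ∧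
      ((0 : A) ≠ -a + b) ∧ ((0 : A) ≠ a - b) ∧ ((0 : A) ≠ -a - b) := by
    refine ⟨?_,?_,?_,?_,?_,?_,?_,?_,?_,?_,?_,?_,?_,?_,?_,?_,?_,?_,?_⟩ <;>
      refine NE _ _ (fun h => ?_) <;>
      first
        | (apply ha; rw [← h]; abel1)
        | (apply hb; rw [← h]; abel1)
        | (apply hab; rw [← h]; abel1)
        | (apply ha'; rw [← h]; abel1)
        | (apply hb'; rw [← h]; abel1)
        | (apply hab'; rw [← h]; abel1)
        | (apply hne'; rw [← h]; abel1)
        | (apply hne''; rw [← h]; abel1)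
  -- non-membership of 0 in each of the four target sets
  have h0T1 : (0 : A) ∉ ({a, b, a + b} : Set A) := by
    simp only [Set.mem_insert_iff, Set.mem_singleton_iff, not_or]; exact ⟨n0a, n0b, n0ab⟩
  have h0T2 : (0 : A) ∉ ({-a, b, -a + b} : Set A) := by
    simp only [Set.mem_insert_iff, Set.mem_singleton_iff, not_or]; exact ⟨n0na, n0b, n0nab⟩
  have h0T3 : (0 : A) ∉ ({a, -b, a - b} : Set A) := by
    simp only [Set.mem_insert_iff, Set.mem_singleton_iff, not_or]; exact ⟨n0a, n0nb, n0amb⟩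
  have h0T4 : (0 : A) ∉ ({-a, -b, -a - b} : Set A) := by
    simp only [Set.mem_insert_iff, Set.mem_singleton_iff, not_or]; exact ⟨n0na, n0nb, n0nanb⟩
  -- the eight translate computations
  have P1 : ({0 + (0:A), a + 0, b + 0, a + b + 0} : Set A) = insert 0 {a, b, a + b} := by
    ext x; simp only [Set.mem_insert_iff, Set.mem_singleton_iff]
    constructor <;> rintro (rfl|rfl|rfl|rfl) <;> simp <;> (try abel_nf) <;> tauto
  have P2 : ({0 + -a, a + -a, b + -a, a + b + -a} : Set A) = insert 0 {-a, b, -a + b} := by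
    ext x; simp only [Set.mem_insert_iff, Set.mem_singleton_iff]
    constructor <;> rintro (rfl|rfl|rfl|rfl) <;> simp <;> (try abel_nf) <;> tauto
  have P3 : ({0 + -b, a + -b, b + -b, a + b + -b} : Set A) = insert 0 {a, -b, a - b} := by
    ext x; simp only [Set.mem_insert_iff, Set.mem_singleton_iff]
    constructor <;> rintro (rfl|rfl|rfl|rfl) <;> simp <;> (try abel_nf) <;> tauto
  have P4 : ({0 + -(a + b), a + -(a + b), b + -(a + b), a + b + -(a + b)} : Set A) =
      insert 0 {-a, -b, -a - b} := by
    ext x; simp only [Set.mem_insert_iff, Set.mem_singleton_iff]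
    constructor <;> rintro (rfl|rfl|rfl|rfl) <;> simp <;> (try abel_nf) <;> tauto
  have N1 : ({-0 + (0:A), -a + 0, -b + 0, -(a + b) + 0} : Set A) =
      insert 0 {-a, -b, -a - b} := by
    ext x; simp only [Set.mem_insert_iff, Set.mem_singleton_iff]
    constructor <;> rintro (rfl|rfl|rfl|rfl) <;> simp <;> (try abel_nf) <;> tauto
  have N2 : ({-0 + a, -a + a, -b + a, -(a + b) + a} : Set A) = insert 0 {a, -b, a - b} := by
    ext x; simp only [Set.mem_insert_iff, Set.mem_singleton_iff]
    constructor <;> rintro (rfl|rfl|rfl|rfl) <;> simp <;> (try abel_nf) <;> tauto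
  have N3 : ({-0 + b, -a + b, -b + b, -(a + b) + b} : Set A) = insert 0 {-a, b, -a + b} := by
    ext x; simp only [Set.mem_insert_iff, Set.mem_singleton_iff]
    constructor <;> rintro (rfl|rfl|rfl|rfl) <;> simp <;> (try abel_nf) <;> tauto
  have N4 : ({-0 + (a + b), -a + (a + b), -b + (a + b), -(a + b) + (a + b)} : Set A) =
      insert 0 {a, b, a + b} := by
    ext x; simp only [Set.mem_insert_iff, Set.mem_singleton_iff]
    constructor <;> rintro (rfl|rfl|rfl|rfl) <;> simp <;> (try abel_nf) <;> tauto
  -- helper to cancel `insert 0`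
  have CAN : ∀ (Y T : Set A), (0 : A) ∉ Y → (0 : A) ∉ T → insert (0:A) Y = insert (0:A) T →
      Y = T := by
    intro Y T h0Y h0T h
    have h2 : insert (0:A) Y \ {0} = insert (0:A) T \ {0} := by rw [h]
    rwa [Set.insert_diff_self_of_notMem h0Y, Set.insert_diff_self_of_notMem h0T] at h2
  ext Y
  simp only [Set.mem_setOf_eq, orbHat, Set.mem_insert_iff, Set.mem_singleton_iff]
  constructor
  · rintro ⟨-, h0Y, e, hor | hor⟩ <;>
      simp only [Set.image_insert_eq, Set.image_singleton] at hor <;>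
      [ (have h0m : (0:A) ∈ insert (0:A) Y := Set.mem_insert _ _
         rw [hor] at h0m
         simp only [Set.mem_insert_iff, Set.mem_singleton_iff] at h0m
         rcases h0m with h | h | h | h
         · obtain rfl : e = 0 := by simpa using h.symm
           rw [P1] at hor
           exact Or.inl (CAN Y _ h0Y h0T1 hor)
         · obtain rfl : e = -a := by rw [← sub_eq_zero, h]; abel1
           rw [P2] at hor
           exact Or.inr (Or.inl (CAN Y _ h0Y h0T2 hor))
         · obtain rfl : e = -b := by rw [← sub_eq_zero, h]; abel1
           rw [P3] at hor
           exact Or.inr (Or.inr (Or.inl (CAN Y _ h0Y h0T3 hor)))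
         · obtain rfl : e = -(a + b) := by rw [← sub_eq_zero, h]; abel1
           rw [P4] at hor
           exact Or.inr (Or.inr (Or.inr (CAN Y _ h0Y h0T4 hor)))) ;
        (have h0m : (0:A) ∈ insert (0:A) Y := Set.mem_insert _ _
         rw [hor] at h0m
         simp only [Set.mem_insert_iff, Set.mem_singleton_iff] at h0m
         rcases h0m with h | h | h | h
         · obtain rfl : e = 0 := by simpa using h.symm
           rw [N1] at hor
           exact Or.inr (Or.inr (Or.inr (CAN Y _ h0Y h0T4 hor)))
         · obtain rfl : e = a := by rw [← sub_eq_zero, h]; abel1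
           rw [N2] at hor
           exact Or.inr (Or.inr (Or.inl (CAN Y _ h0Y h0T3 hor)))
         · obtain rfl : e = b := by rw [← sub_eq_zero, h]; abel1
           rw [N3] at hor
           exact Or.inr (Or.inl (CAN Y _ h0Y h0T2 hor))
         · obtain rfl : e = a + b := by rw [← sub_eq_zero, h]; abel1
           rw [N4] at hor
           exact Or.inl (CAN Y _ h0Y h0T1 hor)) ]
  · rintro (rfl | rfl | rfl | rfl)
    · exact ⟨Set.ncard_eq_three.mpr ⟨_, _, _, hne, d12, d13, rfl⟩, h0T1,
        0, Or.inl (by simp only [Set.image_insert_eq, Set.image_singleton]; exact P1.symm)⟩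
    · exact ⟨Set.ncard_eq_three.mpr ⟨_, _, _, d21, d22, d23, rfl⟩, h0T2,
        -a, Or.inl (by simp only [Set.image_insert_eq, Set.image_singleton]; exact P2.symm)⟩
    · exact ⟨Set.ncard_eq_three.mpr ⟨_, _, _, d31, d32, d33, rfl⟩, h0T3,
        -b, Or.inl (by simp only [Set.image_insert_eq, Set.image_singleton]; exact P3.symm)⟩
    · exact ⟨Set.ncard_eq_three.mpr ⟨_, _, _, d41, d42, d43, rfl⟩, h0T4,
        -(a + b), Or.inl (by simp only [Set.image_insert_eq, Set.image_singleton]; exact P4.symm)⟩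
end

section
/- Let A be an abelian group and a, b ∈ A with 0, a, b, a+b four distinct elements. Suppose there exist c, d ∈ A such that the Â-orbit of {0, a, b, a+b} equals the Â-orbit of {0, c, d, c+d}, with 2c ≠ 0, 2d ≠ 0, and {±c, ±2c} ∩ {±d, ±2d} = ∅. Then 2a ≠ 0, 2b ≠ 0, and {±a, ±2a} ∩ {±b, ±2b} = ∅. -/
variable {A : Type*}

section Aux

variable [AddCommGroup A]

private lemma quad_neg (x : A) :
    ({-x, -(-x), -x + -x, -(-x + -x)} : Set A) = {x, -x, x + x, -(x + x)} := by
  ext z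
  simp only [Set.mem_insert_iff, Set.mem_singleton_iff, neg_neg,
    show -x + -x = -(x + x) from by abel]
  tauto

private lemma P_neg_left {x y : A} (hx : x + x ≠ 0)
    (hint : ({x, -x, x + x, -(x + x)} ∩ {y, -y, y + y, -(y + y)} : Set A) = ∅) :
    -x + -x ≠ 0 ∧
      ({-x, -(-x), -x + -x, -(-x + -x)} ∩ {y, -y, y + y, -(y + y)} : Set A) = ∅ := by
  constructor
  · intro h0
    exact hx (by have : -(x + x) = 0 := by rw [← h0]; abel
                 exact neg_eq_zero.mp this)
  · rw [quad_neg]; exact hint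

private lemma P_neg_right {x y : A} (hy : y + y ≠ 0)
    (hint : ({x, -x, x + x, -(x + x)} ∩ {y, -y, y + y, -(y + y)} : Set A) = ∅) :
    -y + -y ≠ 0 ∧
      ({x, -x, x + x, -(x + x)} ∩ {-y, -(-y), -y + -y, -(-y + -y)} : Set A) = ∅ := by
  constructor
  · intro h0
    exact hy (by have : -(y + y) = 0 := by rw [← h0]; abel
                 exact neg_eq_zero.mp this)
  · rw [quad_neg]; exact hint

private lemma key (a b x y : A) (ha : a ≠ 0) (hb : b ≠ 0) (hab : a + b ≠ 0) (hne : a ≠ b)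
    (hS : ({0, a, b, a + b} : Set A) = {0, x, y, x + y})
    (hx : x + x ≠ 0) (hy : y + y ≠ 0)
    (hint : ({x, -x, x + x, -(x + x)} ∩ {y, -y, y + y, -(y + y)} : Set A) = ∅) :
    a + a ≠ 0 ∧ b + b ≠ 0 ∧
      ({a, -a, a + a, -(a + a)} ∩ {b, -b, b + b, -(b + b)} : Set A) = ∅ := by
  have hI : ∀ z : A, (z = x ∨ z = -x ∨ z = x + x ∨ z = -(x + x)) →
      (z = y ∨ z = -y ∨ z = y + y ∨ z = -(y + y)) → False := by
    intro z h1 h2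
    have := Set.eq_empty_iff_forall_notMem.mp hint z
    simp only [Set.mem_inter_iff, Set.mem_insert_iff, Set.mem_singleton_iff] at this
    exact this ⟨h1, h2⟩
  have hx0 : x ≠ 0 := fun h0 => hx (by rw [h0, add_zero])
  have hy0 : y ≠ 0 := fun h0 => hy (by rw [h0, add_zero])
  have hxy : x + y ≠ 0 := fun h0 =>
    hI y (Or.inr (Or.inl (eq_neg_of_add_eq_zero_right h0))) (Or.inl rfl)
  have hma : a = 0 ∨ a = x ∨ a = y ∨ a = x + y := by
    have : a ∈ ({0, x, y, x + y} : Set A) := by rw [← hS]; simp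
    simpa using this
  have hmb : b = 0 ∨ b = x ∨ b = y ∨ b = x + y := by
    have : b ∈ ({0, x, y, x + y} : Set A) := by rw [← hS]; simp
    simpa using this
  have hmab : a + b = 0 ∨ a + b = x ∨ a + b = y ∨ a + b = x + y := by
    have : a + b ∈ ({0, x, y, x + y} : Set A) := by rw [← hS]; simp
    simpa using this
  rcases hma with h1 | h1 | h1 | h1
  · exact absurd h1 ha
  · -- a = x
    rcases hmb with h2 | h2 | h2 | h2
    · exact absurd h2 hb
    · exact absurd (h1.trans h2.symm) hne
    · rw [h1, h2]; exact ⟨hx, hy, hint⟩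
    · exfalso
      rw [h1, h2] at hmab
      rcases hmab with h | h | h | h
      · exact hab (by rw [h1, h2]; exact h)
      · exact hxy (by have h3 : x + y = x + (x + y) - (x) := (by abel); rw [h3, h]; abel)
      · exact hx (by have h3 : x + x = x + (x + y) - (y) := (by abel); rw [h3, h]; abel)
      · exact hx0 (by have h3 : x = x + (x + y) - (x + y) := (by abel); rw [h3, h]; abel)
  · -- a = y
    rcases hmb with h2 | h2 | h2 | h2
    · exact absurd h2 hb
    · rw [h1, h2]; exact ⟨hy, hx, by rw [Set.inter_comm]; exact hint⟩
    · exact absurd (h1.trans h2.symm) hne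
    · exfalso
      rw [h1, h2] at hmab
      rcases hmab with h | h | h | h
      · exact hab (by rw [h1, h2]; exact h)
      · exact hy (by have h3 : y + y = y + (x + y) - (x) := (by abel); rw [h3, h]; abel)
      · exact hxy (by have h3 : x + y = y + (x + y) - (y) := (by abel); rw [h3, h]; abel)
      · exact hy0 (by have h3 : y = y + (x + y) - (x + y) := (by abel); rw [h3, h]; abel)
  · -- a = x + y
    rcases hmb with h2 | h2 | h2 | h2
    · exact absurd h2 hb
    · exfalso
      rw [h1, h2] at hmab
      rcases hmab with h | h | h | h
      · exact hab (by rw [h1, h2]; exact h)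
      · exact hxy (by have h3 : x + y = x + y + x - (x) := (by abel); rw [h3, h]; abel)
      · exact hx (by have h3 : x + x = x + y + x - (y) := (by abel); rw [h3, h]; abel)
      · exact hx0 (by have h3 : x = x + y + x - (x + y) := (by abel); rw [h3, h]; abel)
    · exfalso
      rw [h1, h2] at hmab
      rcases hmab with h | h | h | h
      · exact hab (by rw [h1, h2]; exact h)
      · exact hy (by have h3 : y + y = x + y + y - (x) := (by abel); rw [h3, h]; abel)
      · exact hxy (by have h3 : x + y = x + y + y - (y) := (by abel); rw [h3, h]; abel)
      · exact hy0 (by have h3 : y = x + y + y - (x + y) := (by abel); rw [h3, h]; abel)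
    · exact absurd (h1.trans h2.symm) hne

private lemma main_aux (a b c d e : A) (ha : a ≠ 0) (hb : b ≠ 0) (hab : a + b ≠ 0)
    (hne : a ≠ b)
    (hS : ({0, a, b, a + b} : Set A) = {e, c + e, d + e, c + d + e})
    (hc : c + c ≠ 0) (hd : d + d ≠ 0)
    (hint : ({c, -c, c + c, -(c + c)} ∩ {d, -d, d + d, -(d + d)} : Set A) = ∅) :
    a + a ≠ 0 ∧ b + b ≠ 0 ∧
      ({a, -a, a + a, -(a + a)} ∩ {b, -b, b + b, -(b + b)} : Set A) = ∅ := by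
  have h0 : (0 : A) ∈ ({e, c + e, d + e, c + d + e} : Set A) := by rw [← hS]; simp
  simp only [Set.mem_insert_iff, Set.mem_singleton_iff] at h0
  rcases h0 with h0 | h0 | h0 | h0
  · -- e = 0
    subst h0
    have hS2 : ({0, a, b, a + b} : Set A) = {0, c, d, c + d} := by
      rw [hS]; simp
    exact key a b c d ha hb hab hne hS2 hc hd hint
  · -- e = -c
    have he : e = -c := by rw [eq_neg_of_add_eq_zero_right h0.symm]
    subst he
    have hS2 : ({0, a, b, a + b} : Set A) = {0, -c, d, -c + d} := by
      rw [hS, show c + -c = 0 from by abel, show d + -c = -c + d from by abel,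
        show c + d + -c = d from by abel]
      ext z; simp only [Set.mem_insert_iff, Set.mem_singleton_iff]; tauto
    obtain ⟨hc', hint'⟩ := P_neg_left hc hint
    exact key a b (-c) d ha hb hab hne hS2 hc' hd hint'
  · -- e = -d
    have he : e = -d := by rw [eq_neg_of_add_eq_zero_right h0.symm]
    subst he
    have hS2 : ({0, a, b, a + b} : Set A) = {0, c, -d, c + -d} := by
      rw [hS, show d + -d = 0 from by abel, show c + d + -d = c from by abel]
      ext z; simp only [Set.mem_insert_iff, Set.mem_singleton_iff]; tauto
    obtain ⟨hd', hint'⟩ := P_neg_right hd hint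
    exact key a b c (-d) ha hb hab hne hS2 hc hd' hint'
  · -- e = -(c + d)
    have he : e = -(c + d) := by rw [eq_neg_of_add_eq_zero_right h0.symm]
    subst he
    have hS2 : ({0, a, b, a + b} : Set A) = {0, -c, -d, -c + -d} := by
      rw [hS, show c + -(c + d) = -d from by abel, show d + -(c + d) = -c from by abel,
        show c + d + -(c + d) = 0 from by abel, show -(c + d) = -c + -d from by abel]
      ext z; simp only [Set.mem_insert_iff, Set.mem_singleton_iff]; tauto
    obtain ⟨hc', hint'⟩ := P_neg_left hc hint
    obtain ⟨hd', hint''⟩ := P_neg_right hd hint'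
    exact key a b (-c) (-d) ha hb hab hne hS2 hc' hd' hint''

end Aux

theorem stmt_3 [AddCommGroup A] (a b : A)
    (hcard : ({0, a, b, a + b} : Set A).ncard = 4)
    (h : ∃ c d : A, orbHat ({0, a, b, a + b} : Set A) = orbHat ({0, c, d, c + d} : Set A) ∧
      c + c ≠ 0 ∧ d + d ≠ 0 ∧
      ({c, -c, c + c, -(c + c)} ∩ {d, -d, d + d, -(d + d)} : Set A) = ∅) :
    a + a ≠ 0 ∧ b + b ≠ 0 ∧
      ({a, -a, a + a, -(a + a)} ∩ {b, -b, b + b, -(b + b)} : Set A) = ∅ := by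
  obtain ⟨c, d, horb, hc, hd, hint⟩ := h
  -- distinctness facts from hcard
  have hsmall : ∀ u v w : A, ({u, v, w} : Set A).ncard ≤ 3 := by
    intro u v w
    calc ({u, v, w} : Set A).ncard ≤ ({v, w} : Set A).ncard + 1 := Set.ncard_insert_le _ _
      _ ≤ (({w} : Set A).ncard + 1) + 1 := by
          have := Set.ncard_insert_le v ({w} : Set A); omega
      _ ≤ 3 := by simp [Set.ncard_singleton]
  have ha : a ≠ 0 := by
    rintro rfl
    rw [show ({0, 0, b, 0 + b} : Set A) = {0, 0, b} from by simp] at hcard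
    have := hsmall (0 : A) 0 b; omega
  have hb : b ≠ 0 := by
    rintro rfl
    rw [show ({0, a, 0, a + 0} : Set A) = {0, a, a} from by
      ext z; simp only [Set.mem_insert_iff, Set.mem_singleton_iff, add_zero]; tauto] at hcard
    have := hsmall (0 : A) a a; omega
  have hab : a + b ≠ 0 := by
    intro h0
    rw [show ({0, a, b, a + b} : Set A) = {a + b, a, b} from by
      ext z; simp only [Set.mem_insert_iff, Set.mem_singleton_iff, h0]; tauto] at hcard
    have := hsmall (a + b) a b; omega
  have hne : a ≠ b := by
    rintro rfl
    rw [show ({0, a, a, a + a} : Set A) = {0, a, a + a} from by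
      ext z; simp only [Set.mem_insert_iff, Set.mem_singleton_iff]; tauto] at hcard
    have := hsmall (0 : A) a (a + a); omega
  -- extract set form from orbit equality
  have hmem : ({0, a, b, a + b} : Set A) ∈ orbHat ({0, c, d, c + d} : Set A) := by
    rw [← horb]
    exact ⟨0, Or.inl (by simp)⟩
  obtain ⟨e, hS | hS⟩ := hmem
  · rw [show (fun x => x + e) '' ({0, c, d, c + d} : Set A)
        = {e, c + e, d + e, c + d + e} from by simp [Set.image_insert_eq]] at hS
    exact main_aux a b c d e ha hb hab hne hS hc hd hint
  · rw [show (fun x => -x + e) '' ({0, c, d, c + d} : Set A)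
        = {e, -c + e, -d + e, -c + -d + e} from by
      simp only [Set.image_insert_eq, Set.image_singleton, neg_zero, zero_add,
        show -(c + d) = -c + -d from by abel]] at hS
    obtain ⟨hc', hint'⟩ := P_neg_left hc hint
    obtain ⟨hd', hint''⟩ := P_neg_right hd hint'
    exact main_aux a b (-c) (-d) e ha hb hab hne hS hc' hd' hint''
end

section
/- Let A be an abelian group and a, b ∈ A with B = {0, a, b, a+b} a 4-element set satisfying 2a ≠ 0, 2b ≠ 0, and {±a, ±2a} ∩ {±b, ±2b} = ∅. If T is a 3-element subset of B, then B is the unique member of the Â-orbit of B containing T. -/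
variable {A : Type*}

theorem stmt_4 [AddCommGroup A] (a b : A)
    (hcard : ({0, a, b, a + b} : Set A).ncard = 4)
    (ha2 : a + a ≠ 0) (hb2 : b + b ≠ 0)
    (hdisj : ({a, -a, a + a, -(a + a)} ∩ {b, -b, b + b, -(b + b)} : Set A) = ∅)
    (T : Set A) (hT : T ⊆ ({0, a, b, a + b} : Set A)) (hT3 : T.ncard = 3) :
    ∀ B' ∈ orbHat ({0, a, b, a + b} : Set A), T ⊆ B' → B' = ({0, a, b, a + b} : Set A) := by
  -- extract pairwise disjointness facts
  have hdj : ∀ x ∈ ({a, -a, a + a, -(a + a)} : Set A),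
      ∀ y ∈ ({b, -b, b + b, -(b + b)} : Set A), x ≠ y := by
    intro x hx y hy hxy
    have hmem : x ∈ ({a, -a, a + a, -(a + a)} ∩ {b, -b, b + b, -(b + b)} : Set A) :=
      ⟨hx, hxy ▸ hy⟩
    rw [hdisj] at hmem
    exact hmem
  have ha0 : a ≠ 0 := fun h => ha2 (by rw [h, add_zero])
  have hb0 : b ≠ 0 := fun h => hb2 (by rw [h, add_zero])
  have hab : a ≠ b := hdj a (by simp) b (by simp)
  have habn : a ≠ -b := hdj a (by simp) (-b) (by simp)
  have hab0 : a + b ≠ 0 := fun h => habn (add_eq_zero_iff_eq_neg.mp h)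
  have h2ab : a + a ≠ b := hdj (a + a) (by simp) b (by simp)
  have h2abn : a + a ≠ -b := hdj (a + a) (by simp) (-b) (by simp)
  have ha2b : a ≠ b + b := hdj a (by simp) (b + b) (by simp)
  have ha2bn : a ≠ -(b + b) := hdj a (by simp) (-(b + b)) (by simp)
  -- step lemmas: a pair in B differing by a starts at 0 or b
  have hstep_a : ∀ x : A, x ∈ ({0, a, b, a + b} : Set A) →
      x + a ∈ ({0, a, b, a + b} : Set A) → x = 0 ∨ x = b := by
    intro x hx hxa
    simp only [Set.mem_insert_iff, Set.mem_singleton_iff] at hx hxa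
    rcases hx with rfl | rfl | rfl | rfl
    · exact Or.inl rfl
    · exfalso
      rcases hxa with h | h | h | h
      · exact ha2 h
      · exact ha0 (add_eq_left.mp h)
      · exact h2ab h
      · exact hab (add_left_cancel h)
    · exact Or.inr rfl
    · exfalso
      rw [add_right_comm] at hxa
      rcases hxa with h | h | h | h
      · exact h2abn (add_eq_zero_iff_eq_neg.mp h)
      · exact hab0 (add_left_cancel (show a + (a + b) = a + 0 by
          rw [add_zero, ← add_assoc]; exact h))
      · exact ha2 (add_eq_right.mp h)
      · exact ha0 (add_eq_left.mp (add_right_cancel h))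
  have hstep_b : ∀ x : A, x ∈ ({0, a, b, a + b} : Set A) →
      x + b ∈ ({0, a, b, a + b} : Set A) → x = 0 ∨ x = a := by
    intro x hx hxb
    simp only [Set.mem_insert_iff, Set.mem_singleton_iff] at hx hxb
    rcases hx with rfl | rfl | rfl | rfl
    · exact Or.inl rfl
    · exact Or.inr rfl
    · exfalso
      rcases hxb with h | h | h | h
      · exact hb2 h
      · exact ha2b h.symm
      · exact hb0 (add_eq_right.mp h)
      · exact hab (add_right_cancel h).symm
    · exfalso
      rcases hxb with h | h | h | h
      · rw [add_assoc] at h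
        exact ha2bn (add_eq_zero_iff_eq_neg.mp h)
      · rw [add_assoc] at h
        exact hb2 (add_eq_left.mp h)
      · exact hab0 (add_eq_right.mp h)
      · exact hb0 (add_eq_left.mp h)
  -- T = B \ {m} for some m ∈ B
  have hBfin : ({0, a, b, a + b} : Set A).Finite := Set.toFinite _
  have h1 : (({0, a, b, a + b} : Set A) \ T).ncard = 1 := by
    rw [Set.ncard_diff hT (hBfin.subset hT), hcard, hT3]
  obtain ⟨m, hm⟩ := Set.ncard_eq_one.mp h1
  have hmBT : m ∈ ({0, a, b, a + b} : Set A) \ T := by rw [hm]; rfl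
  have hmB : m ∈ ({0, a, b, a + b} : Set A) := hmBT.1
  have hTm : T = ({0, a, b, a + b} : Set A) \ {m} := by
    rw [← hm, Set.diff_diff_cancel_left hT]
  -- T contains a pair differing by a and a pair differing by b
  have hmem : ∀ x : A, x ∈ ({0, a, b, a + b} : Set A) → x ≠ m → x ∈ T := by
    intro x hx hxm
    rw [hTm]
    exact ⟨hx, hxm⟩
  have hmB' : m = 0 ∨ m = a ∨ m = b ∨ m = a + b := by
    simpa using hmB
  have hta : ∃ t, t ∈ T ∧ t + a ∈ T := by
    rcases hmB' with h | h | h | h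
    · refine ⟨b, hmem b (by simp) (by rw [h]; exact hb0), hmem (b + a) ?_ ?_⟩
      · rw [add_comm]; simp
      · rw [h, add_comm]; exact hab0
    · refine ⟨b, hmem b (by simp) (by rw [h]; exact fun hh => hab hh.symm),
        hmem (b + a) ?_ ?_⟩
      · rw [add_comm]; simp
      · rw [h, add_comm]
        intro hh
        exact hb0 (add_eq_left.mp hh)
    · refine ⟨0, hmem 0 (by simp) (by rw [h]; exact fun hh => hb0 hh.symm),
        hmem (0 + a) ?_ ?_⟩
      · rw [zero_add]; simp
      · rw [zero_add, h]; exact hab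
    · refine ⟨0, hmem 0 (by simp) (by rw [h]; exact fun hh => hab0 hh.symm),
        hmem (0 + a) ?_ ?_⟩
      · rw [zero_add]; simp
      · rw [zero_add, h]
        intro hh
        exact hb0 (add_eq_left.mp hh.symm)
  have htb : ∃ s, s ∈ T ∧ s + b ∈ T := by
    rcases hmB' with h | h | h | h
    · exact ⟨a, hmem a (by simp) (by rw [h]; exact ha0),
        hmem (a + b) (by simp) (by rw [h]; exact hab0)⟩
    · refine ⟨0, hmem 0 (by simp) (by rw [h]; exact fun hh => ha0 hh.symm),
        hmem (0 + b) ?_ ?_⟩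
      · rw [zero_add]; simp
      · rw [zero_add, h]; exact fun hh => hab hh.symm
    · refine ⟨a, hmem a (by simp) (by rw [h]; exact hab),
        hmem (a + b) (by simp) ?_⟩
      · rw [h]
        intro hh
        exact ha0 (add_eq_right.mp hh)
    · refine ⟨0, hmem 0 (by simp) (by rw [h]; exact fun hh => hab0 hh.symm),
        hmem (0 + b) ?_ ?_⟩
      · rw [zero_add]; simp
      · rw [zero_add, h]
        intro hh
        exact ha0 (add_eq_right.mp hh.symm)
  -- key: any translate of B containing T is B itself
  have key : ∀ e : A, T ⊆ (fun x => x + e) '' ({0, a, b, a + b} : Set A) →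
      (fun x => x + e) '' ({0, a, b, a + b} : Set A) = ({0, a, b, a + b} : Set A) := by
    intro e hTe
    obtain ⟨t, htT, htaT⟩ := hta
    obtain ⟨y, hyB, hy⟩ := hTe htT
    obtain ⟨z, hzB, hz⟩ := hTe htaT
    simp only at hy hz
    have hzy : z = y + a := by
      apply add_right_cancel (b := e)
      rw [hz, ← hy]
      abel
    have hy2 : y = 0 ∨ y = b := hstep_a y hyB (by rwa [hzy] at hzB)
    have ht2 : t = 0 ∨ t = b := hstep_a t (hT htT) (hT htaT)
    have he_b : e = 0 ∨ e = b ∨ e = -b := by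
      rcases hy2 with rfl | rfl <;> rcases ht2 with h | h
      · left; rw [h] at hy; rw [zero_add] at hy; exact hy
      · right; left; rw [h] at hy; rw [zero_add] at hy; exact hy
      · right; right; rw [h] at hy
        rw [eq_neg_iff_add_eq_zero, add_comm]; exact hy
      · left; rw [h] at hy; exact add_eq_left.mp hy
    obtain ⟨s, hsT, hsbT⟩ := htb
    obtain ⟨y', hyB', hy'⟩ := hTe hsT
    obtain ⟨z', hzB', hz'⟩ := hTe hsbT
    simp only at hy' hz'
    have hzy' : z' = y' + b := by
      apply add_right_cancel (b := e)
      rw [hz', ← hy']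
      abel
    have hy2' : y' = 0 ∨ y' = a := hstep_b y' hyB' (by rwa [hzy'] at hzB')
    have hs2 : s = 0 ∨ s = a := hstep_b s (hT hsT) (hT hsbT)
    have he_a : e = 0 ∨ e = a ∨ e = -a := by
      rcases hy2' with rfl | rfl <;> rcases hs2 with h | h
      · left; rw [h] at hy'; rw [zero_add] at hy'; exact hy'
      · right; left; rw [h] at hy'; rw [zero_add] at hy'; exact hy'
      · right; right; rw [h] at hy'
        rw [eq_neg_iff_add_eq_zero, add_comm]; exact hy'
      · left; rw [h] at hy'; exact add_eq_left.mp hy'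
    have he0 : e = 0 := by
      rcases he_b with h | h | h
      · exact h
      · exfalso
        rcases he_a with h' | h' | h'
        · exact hb0 (h.symm.trans h')
        · exact hab (h'.symm.trans h)
        · refine hab0 ?_
          rw [add_comm]
          exact add_eq_zero_iff_eq_neg.mpr (h.symm.trans h')
      · exfalso
        rcases he_a with h' | h' | h'
        · exact hb0 (neg_eq_zero.mp (h.symm.trans h'))
        · exact habn (h'.symm.trans h)
        · exact hab (neg_inj.mp (h.symm.trans h')).symm
    subst he0
    have hid : (fun x : A => x + 0) = id := funext fun x => add_zero x
    rw [hid, Set.image_id]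
  -- the negated copy is a translate
  have heqneg : ∀ e : A, (fun x => -x + e) '' ({0, a, b, a + b} : Set A)
      = (fun x => x + (e - (a + b))) '' ({0, a, b, a + b} : Set A) := by
    intro e
    simp only [Set.image_insert_eq, Set.image_singleton]
    ext x
    simp only [Set.mem_insert_iff, Set.mem_singleton_iff]
    constructor
    · rintro (rfl | rfl | rfl | rfl)
      · right; right; right; abel
      · right; right; left; abel
      · right; left; abel
      · left; abel
    · rintro (rfl | rfl | rfl | rfl)
      · right; right; right; abel
      · right; right; left; abel
      · right; left; abel
      · left; abel
  intro B' hB' hTB'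
  obtain ⟨e, h | h⟩ := hB'
  · rw [h]
    exact key e (h ▸ hTB')
  · rw [h, heqneg e]
    apply key
    rw [← heqneg e, ← h]
    exact hTB'
end

section
/- Let A be an abelian group and a, b ∈ A with {0, a, b, a+b} a 4-element set, 2a ≠ 0, 2b ≠ 0, and {±a, ±2a} ∩ {±b, ±2b} = ∅. Then the set of Â-orbits of 3-element subsets of {0, a, b, a+b} equals the two-element set consisting of the Â-orbit of {0, a, b} and the Â-orbit of {0, a, a+b}; in particular these two orbits are distinct. -/
variable {A : Type*}

/-! The reflection `x ↦ -x + (a + b)` maps the parallelogram `{0, a, b, a + b}` onto itself,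
swapping `0 ↔ a + b` and `a ↔ b`, so each of its four 3-element subsets lies in the orbit of
`{0, a, b}` or of `{0, a, a + b}`. The two orbits are told apart by the difference set `X - X`,
which is invariant under translations and under `x ↦ -x`: `a - b` lies in `{0, a, b} - {0, a, b}`
but, by the hypotheses on `a` and `b`, not in `{0, a, a + b} - {0, a, a + b}`. -/

open scoped Pointwise

theorem List.ncard_toFinset_eq_length_iff {α : Type*} [DecidableEq α] {l : List α} :
    (l.toFinset : Set α).ncard = l.length ↔ l.Nodup := by
  rw [Set.ncard_coe_finset]
  exact Multiset.toFinset_card_eq_card_iff_nodup (m := (l : Multiset α))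

theorem Set.exists_eq_diff_singleton_of_ncard_eq_add_one {α : Type*} {s t : Set α}
    (hts : t ⊆ s) (hs : s.Finite) (h : s.ncard = t.ncard + 1) : ∃ x ∈ s, t = s \ {x} := by
  obtain ⟨x, hx⟩ : ∃ x, s \ t = {x} := by
    rw [← Set.ncard_eq_one, Set.ncard_sdiff hts (hs.subset hts)]
    omega
  refine ⟨x, (hx ▸ Set.mem_singleton x : x ∈ s \ t).1, ?_⟩
  rw [← hx, sdiff_sdiff_cancel_left hts]

section
variable [AddCommGroup A] {X Y : Set A}

theorem orbHat_self (X : Set A) : X ∈ orbHat X := ⟨0, .inl (by simp)⟩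

theorem orbHat_image_add_right (X : Set A) (e : A) :
    orbHat ((fun x => x + e) '' X) = orbHat X := by
  ext Y
  simp only [orbHat, Set.image_image]
  constructor
  · rintro ⟨f, hY | hY⟩
    · exact ⟨e + f, Or.inl (hY.trans (Set.image_congr' fun x => by abel))⟩
    · exact ⟨f - e, Or.inr (hY.trans (Set.image_congr' fun x => by abel))⟩
  · rintro ⟨f, hY | hY⟩
    · exact ⟨f - e, Or.inl (hY.trans (Set.image_congr' fun x => by abel))⟩
    · exact ⟨f + e, Or.inr (hY.trans (Set.image_congr' fun x => by abel))⟩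

theorem orbHat_image_neg_add (X : Set A) (e : A) :
    orbHat ((fun x => -x + e) '' X) = orbHat X := by
  ext Y
  simp only [orbHat, Set.image_image]
  constructor
  · rintro ⟨f, hY | hY⟩
    · exact ⟨e + f, Or.inr (hY.trans (Set.image_congr' fun x => by abel))⟩
    · exact ⟨f - e, Or.inl (hY.trans (Set.image_congr' fun x => by abel))⟩
  · rintro ⟨f, hY | hY⟩
    · exact ⟨f + e, Or.inr (hY.trans (Set.image_congr' fun x => by abel))⟩
    · exact ⟨f - e, Or.inl (hY.trans (Set.image_congr' fun x => by abel))⟩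

theorem orbHat_eq_of_mem (h : Y ∈ orbHat X) : orbHat Y = orbHat X := by
  obtain ⟨e, rfl | rfl⟩ := h
  exacts [orbHat_image_add_right X e, orbHat_image_neg_add X e]

theorem sub_self_eq_of_mem_orbHat (h : Y ∈ orbHat X) : Y - Y = X - X := by
  obtain ⟨e, rfl | rfl⟩ := h <;>
    rw [← Set.image2_sub, Set.image2_image_left, Set.image2_image_right]
  · exact Set.image2_congr fun x _ y _ => by abel
  · rw [Set.image2_swap]
    exact Set.image2_congr fun x _ y _ => by abel

theorem orbHat_ne_of_mem_sub_self_of_notMem {d : A} (hX : d ∈ X - X) (hY : d ∉ Y - Y) :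
    orbHat X ≠ orbHat Y :=
  fun h => hY (sub_self_eq_of_mem_orbHat (h ▸ orbHat_self Y) ▸ hX)

variable {a b : A}

theorem sub_notMem_sub_self_insert_zero (ha : a ≠ 0) (hb : b ≠ 0) (hab : a ≠ b)
    (ha2 : a + a ≠ 0) (hb2 : b + b ≠ 0) (hba : b ≠ a + a) (hab2 : a ≠ b + b) :
    a - b ∉ ({0, a, a + b} : Set A) - {0, a, a + b} := by
  simp only [Set.mem_sub, Set.mem_insert_iff, Set.mem_singleton_iff, exists_eq_or_imp,
    exists_eq_left]
  grind

theorem orbHat_parallelogram_diff_singleton (h : [0, a, b, a + b].Nodup) {x : A}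
    (hx : x ∈ ({0, a, b, a + b} : Set A)) :
    orbHat ({0, a, b, a + b} \ {x}) = orbHat {0, a, b} ∨
      orbHat ({0, a, b, a + b} \ {x}) = orbHat {0, a, a + b} := by
  simp only [List.nodup_cons, List.mem_cons, List.not_mem_nil, or_false, not_or] at h
  rcases hx with hx | hx | hx | hx <;> subst x
  · refine .inl (orbHat_eq_of_mem ⟨a + b, .inr ?_⟩)
    ext y
    simp only [Set.mem_sdiff, Set.mem_insert_iff, Set.mem_singleton_iff, Set.mem_image,
      exists_eq_or_imp, exists_eq_left]
    grind
  · refine .inr (orbHat_eq_of_mem ⟨a + b, .inr ?_⟩)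
    ext y
    simp only [Set.mem_sdiff, Set.mem_insert_iff, Set.mem_singleton_iff, Set.mem_image,
      exists_eq_or_imp, exists_eq_left]
    grind
  · refine .inr (congrArg orbHat ?_)
    ext y
    simp only [Set.mem_sdiff, Set.mem_insert_iff, Set.mem_singleton_iff]
    grind
  · refine .inl (congrArg orbHat ?_)
    ext y
    simp only [Set.mem_sdiff, Set.mem_insert_iff, Set.mem_singleton_iff]
    grind

end

theorem stmt_8 [AddCommGroup A] (a b : A)
    (hcard : ({0, a, b, a + b} : Set A).ncard = 4)
    (ha2 : a + a ≠ 0) (hb2 : b + b ≠ 0)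
    (hdisj : ({a, -a, a + a, -(a + a)} ∩ {b, -b, b + b, -(b + b)} : Set A) = ∅) :
    {O : Set (Set A) | ∃ T : Set A, T ⊆ ({0, a, b, a + b} : Set A) ∧ T.ncard = 3 ∧
        O = orbHat T} =
      ({orbHat ({0, a, b} : Set A), orbHat ({0, a, a + b} : Set A)} : Set (Set (Set A))) ∧
    orbHat ({0, a, b} : Set A) ≠ orbHat ({0, a, a + b} : Set A) := by
  classical
  have hnodup : [0, a, b, a + b].Nodup := by
    rw [← List.ncard_toFinset_eq_length_iff]
    simpa using hcard
  have hne : orbHat ({0, a, b} : Set A) ≠ orbHat ({0, a, a + b} : Set A) := by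
    have hba : b ≠ a + a := fun h => Set.eq_empty_iff_forall_notMem.mp hdisj b (by simp [h])
    have hab2 : a ≠ b + b := fun h => Set.eq_empty_iff_forall_notMem.mp hdisj a (by simp [h])
    simp only [List.nodup_cons, List.mem_cons, List.not_mem_nil, or_false, not_or] at hnodup
    exact orbHat_ne_of_mem_sub_self_of_notMem (Set.sub_mem_sub (by simp) (by simp))
      (sub_notMem_sub_self_insert_zero (by grind) (by grind) (by grind) ha2 hb2 hba hab2)
  refine ⟨Set.ext fun O => ⟨?_, ?_⟩, hne⟩
  · rintro ⟨T, hTS, hT3, rfl⟩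
    obtain ⟨x, hx, rfl⟩ := Set.exists_eq_diff_singleton_of_ncard_eq_add_one hTS (Set.toFinite _)
      (by rw [hcard, hT3])
    exact orbHat_parallelogram_diff_singleton hnodup hx
  · rintro (rfl | rfl)
    · refine ⟨_, by grind, ?_, rfl⟩
      have hnodup₃ : [0, a, b].Nodup := hnodup.sublist (by simp)
      simpa using List.ncard_toFinset_eq_length_iff.mpr hnodup₃
    · refine ⟨_, by grind, ?_, rfl⟩
      have hnodup₃ : [0, a, a + b].Nodup := hnodup.sublist (by simp)
      simpa using List.ncard_toFinset_eq_length_iff.mpr hnodup₃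
end

section
/- Let A be an abelian group and a, b ∈ A with 2a ∉ ⟨b⟩ and 2b ∉ ⟨a⟩. Then for integers s, t, the Â-orbit of {0, a, ta+b} equals the Â-orbit of {0, a, sa+b} if and only if ta = sa. -/
variable {A : Type*}

theorem stmt_12 [AddCommGroup A] (a b : A)
    (ha : a + a ∉ AddSubgroup.zmultiples b) (hb : b + b ∉ AddSubgroup.zmultiples a) :
    ∀ s t : ℤ, orbHat ({0, a, t • a + b} : Set A) = orbHat ({0, a, s • a + b} : Set A) ↔
      t • a = s • a := by
  intro s t
  have hb' : ∀ k : ℤ, b + b ≠ k • a := by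
    intro k hk
    exact hb (by rw [hk]; exact AddSubgroup.mem_zmultiples_iff.mpr ⟨k, rfl⟩)
  have ha' : ∀ k : ℤ, a + a ≠ k • b := by
    intro k hk
    exact ha (by rw [hk]; exact AddSubgroup.mem_zmultiples_iff.mpr ⟨k, rfl⟩)
  have h1 : ∀ k : ℤ, b ≠ k • a := by
    intro k hk
    exact hb' (k + k) (by rw [hk]; module)
  have ha0 : a ≠ 0 := fun h => ha' 0 (by simp [h])
  have h2 : a + a ≠ 0 := fun h => ha' 0 (by simp [h])
  constructor
  · intro h
    have hmem : ({0, a, s • a + b} : Set A) ∈ orbHat ({0, a, t • a + b} : Set A) := by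
      rw [h]; exact ⟨0, Or.inl (by simp)⟩
    obtain ⟨e, he | he⟩ := hmem
    · rw [Set.image_insert_eq, Set.image_insert_eq, Set.image_singleton, zero_add] at he
      have m1 : e ∈ ({0, a, s • a + b} : Set A) := by rw [he]; exact Set.mem_insert _ _
      have m2 : a + e ∈ ({0, a, s • a + b} : Set A) := by rw [he]; simp
      have m3 : t • a + b + e ∈ ({0, a, s • a + b} : Set A) := by rw [he]; simp
      simp only [Set.mem_insert_iff, Set.mem_singleton_iff] at m1 m2 m3
      rcases m1 with rfl | rfl | rfl
      · rw [add_zero] at m3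
        rcases m3 with h3 | h3 | h3
        · exact ((h1 (-t)) (by linear_combination (norm := module) h3)).elim
        · exact ((h1 (1 - t)) (by linear_combination (norm := module) h3)).elim
        · exact add_right_cancel h3
      · rcases m2 with h3 | h3 | h3
        · exact (h2 h3).elim
        · exact (ha0 (by linear_combination (norm := module) h3)).elim
        · exact ((h1 (2 - s)) (by linear_combination (norm := module) -h3)).elim
      · rcases m2 with h3 | h3 | h3
        · exact ((h1 (-1 - s)) (by linear_combination (norm := module) h3)).elim
        · exact ((h1 (-s)) (by linear_combination (norm := module) h3)).elim
        · exact (ha0 (by linear_combination (norm := module) h3)).elim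
    · rw [Set.image_insert_eq, Set.image_insert_eq, Set.image_singleton, neg_zero,
        zero_add] at he
      have m1 : e ∈ ({0, a, s • a + b} : Set A) := by rw [he]; exact Set.mem_insert _ _
      have m2 : -a + e ∈ ({0, a, s • a + b} : Set A) := by rw [he]; simp
      have m3 : -(t • a + b) + e ∈ ({0, a, s • a + b} : Set A) := by rw [he]; simp
      simp only [Set.mem_insert_iff, Set.mem_singleton_iff] at m1 m2 m3
      rcases m1 with rfl | rfl | rfl
      · rw [add_zero] at m2
        rcases m2 with h3 | h3 | h3
        · exact (ha0 (by linear_combination (norm := module) -h3)).elim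
        · exact (h2 (by linear_combination (norm := module) -h3)).elim
        · exact ((h1 (-1 - s)) (by linear_combination (norm := module) -h3)).elim
      · rcases m3 with h3 | h3 | h3
        · exact ((h1 (1 - t)) (by linear_combination (norm := module) -h3)).elim
        · exact ((h1 (-t)) (by linear_combination (norm := module) -h3)).elim
        · exact ((hb' (1 - t - s)) (by linear_combination (norm := module) -h3)).elim
      · rcases m2 with h3 | h3 | h3
        · exact ((h1 (1 - s)) (by linear_combination (norm := module) h3)).elim
        · exact ((h1 (2 - s)) (by linear_combination (norm := module) h3)).elim
        · exact (ha0 (by linear_combination (norm := module) -h3)).elim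
  · intro h
    rw [h]
end

section
/- Let A be a finite abelian group of order v with gcd(v, 3) = 1, and let a, b ∈ A \ {a : 2a = 0} (i.e., 2a ≠ 0 and 2b ≠ 0). Then the Â-orbit of {0, a, -a} equals the Â-orbit of {0, b, -b} if and only if a = b or a = -b. -/
variable {A : Type*}

theorem stmt_13 [AddCommGroup A] [Fintype A] (h3 : ¬ (3 ∣ Fintype.card A))
    (a b : A) (ha : a + a ≠ 0) (hb : b + b ≠ 0) :
    orbHat ({0, a, -a} : Set A) = orbHat ({0, b, -b} : Set A) ↔ a = b ∨ a = -b := by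
  have hb0 : b ≠ 0 := fun h => hb (by rw [h, add_zero])
  have ha0 : a ≠ 0 := fun h => ha (by rw [h, add_zero])
  constructor
  · intro h
    have hmem : ({0, b, -b} : Set A) ∈ orbHat ({0, a, -a} : Set A) := by
      rw [h]
      exact ⟨0, Or.inl (by ext x; simp)⟩
    obtain ⟨e, hc⟩ := hmem
    have key : ({0, b, -b} : Set A) = {e, a + e, -a + e} := by
      rcases hc with h1 | h1 <;> rw [h1] <;>
        simp only [Set.image_insert_eq, Set.image_singleton, zero_add, neg_zero, neg_neg]
      ext x
      simp only [Set.mem_insert_iff, Set.mem_singleton_iff]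
      tauto
    have he : e ∈ ({0, b, -b} : Set A) := by
      rw [key]; left; rfl
    have h0 : (0 : A) ∈ ({e, a + e, -a + e} : Set A) := by
      rw [← key]; left; rfl
    simp only [Set.mem_insert_iff, Set.mem_singleton_iff] at he h0
    rcases he with rfl | rfl | rfl
    · have hamem : a ∈ ({0, b, -b} : Set A) := by
        rw [key]; right; left; rw [add_zero]
      simp only [Set.mem_insert_iff, Set.mem_singleton_iff] at hamem
      rcases hamem with h' | h' | h'
      · exact absurd h' ha0
      · exact Or.inl h'
      · exact Or.inr h'
    · rcases h0 with h' | h' | h'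
      · exact absurd h'.symm hb0
      · exact Or.inr (by linear_combination (norm := abel1) -h')
      · exact Or.inl (by linear_combination (norm := abel1) h')
    · rcases h0 with h' | h' | h'
      · exact absurd (neg_eq_zero.mp h'.symm) hb0
      · exact Or.inl (by linear_combination (norm := abel1) -h')
      · exact Or.inr (by linear_combination (norm := abel1) h')
  · rintro (rfl | rfl)
    · rfl
    · have : ({0, -b, -(-b)} : Set A) = {0, b, -b} := by
        rw [neg_neg]
        ext x
        simp only [Set.mem_insert_iff, Set.mem_singleton_iff]
        tauto
      rw [this]
end

section
/- Let A be a finite abelian group of order not divisible by 3, let h₀ ∈ A be an element of order 2, and let a, b ∈ A with 2a ≠ 0 and 2b ≠ 0. Then the Â-orbit of {0, a, -a, h₀} equals the Â-orbit of {0, b, -b, h₀} if and only if b ∈ {a, -a, h₀ + a, h₀ - a}. -/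
variable {A : Type*}

lemma orbHat_translate [AddCommGroup A] (X : Set A) (e : A) :
    orbHat ((fun x => x + e) '' X) = orbHat X := by
  ext Y
  constructor
  · rintro ⟨f, hf | hf⟩
    · refine ⟨e + f, Or.inl ?_⟩
      rw [hf, Set.image_image]
      exact congrArg (· '' X) (funext fun x => by abel)
    · refine ⟨f - e, Or.inr ?_⟩
      rw [hf, Set.image_image]
      exact congrArg (· '' X) (funext fun x => by abel)
  · rintro ⟨f, hf | hf⟩
    · refine ⟨f - e, Or.inl ?_⟩
      rw [hf, Set.image_image]
      exact congrArg (· '' X) (funext fun x => by abel)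
    · refine ⟨f + e, Or.inr ?_⟩
      rw [hf, Set.image_image]
      exact congrArg (· '' X) (funext fun x => by abel)

lemma key_cases [AddCommGroup A] (h₀ e a b : A) (hh : h₀ ≠ 0) (hh2 : h₀ + h₀ = 0)
    (ha : a + a ≠ 0) (hb : b + b ≠ 0)
    (seq : ({0, b, -b, h₀} : Set A) = {e, a + e, -a + e, h₀ + e}) :
    b = a ∨ b = -a ∨ b = h₀ + a ∨ b = h₀ - a := by
  rw [Set.ext_iff] at seq
  simp only [Set.mem_insert_iff, Set.mem_singleton_iff] at seq
  have h2 := (seq 0).mp (Or.inl rfl)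
  rcases h2 with he | he | he | he
  · have he' : (0:A) = e := he
    subst he'
    have h1 := (seq b).mp (Or.inr (Or.inl rfl))
    rw [add_zero, add_zero, add_zero] at h1
    rcases h1 with hx | hx | hx | hx
    · exact absurd (by rw [hx, add_zero]) hb
    · exact Or.inl hx
    · exact Or.inr (Or.inl hx)
    · exact absurd (by rw [hx]; exact hh2) hb
  · have he' : -a = e := by have := congrArg (-a + ·) he; simpa using this
    subst he'
    have h1 := (seq b).mp (Or.inr (Or.inl rfl))
    have h3 := (seq h₀).mp (Or.inr (Or.inr (Or.inr rfl)))
    rcases h1 with hx | hx | hx | hx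
    · exact Or.inr (Or.inl hx)
    · rw [add_neg_cancel] at hx
      exact absurd (by rw [hx, add_zero]) hb
    · rcases h3 with h | h | h | h
      · exact absurd (by rw [h, ← neg_add, neg_eq_zero] at hh2; exact hh2) ha
      · rw [add_neg_cancel] at h; exact absurd h hh
      · exact absurd (by rw [hx, ← h]; exact hh2) hb
      · have : -a = 0 := left_eq_add.mp h
        exact absurd (by rw [neg_eq_zero.mp this, add_zero]) ha
    · exact Or.inr (Or.inr (Or.inr (by rw [hx, sub_eq_add_neg])))
  · have he' : a = e := by have := congrArg (a + ·) he; simpa using this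
    subst he'
    have h1 := (seq b).mp (Or.inr (Or.inl rfl))
    have h3 := (seq h₀).mp (Or.inr (Or.inr (Or.inr rfl)))
    rcases h1 with hx | hx | hx | hx
    · exact Or.inl hx
    · rcases h3 with h | h | h | h
      · exact absurd (by rw [← h]; exact hh2) ha
      · exact absurd (by rw [hx, ← h]; exact hh2) hb
      · rw [neg_add_cancel] at h; exact absurd h hh
      · have : a = 0 := left_eq_add.mp h
        exact absurd (by rw [this, add_zero]) ha
    · rw [neg_add_cancel] at hx
      exact absurd (by rw [hx, add_zero]) hb
    · exact Or.inr (Or.inr (Or.inl hx))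
  · have he' : h₀ = e := by
      have := congrArg (h₀ + ·) he
      simpa [← add_assoc, hh2] using this
    subst he'
    have h1 := (seq b).mp (Or.inr (Or.inl rfl))
    rcases h1 with hx | hx | hx | hx
    · exact absurd (by rw [hx]; exact hh2) hb
    · exact Or.inr (Or.inr (Or.inl (by rw [hx, add_comm])))
    · exact Or.inr (Or.inr (Or.inr (by rw [hx]; abel)))
    · rw [hh2] at hx
      exact absurd (by rw [hx, add_zero]) hb

theorem stmt_14 [AddCommGroup A] [Fintype A] (h3 : ¬ (3 ∣ Fintype.card A))
    (h₀ : A) (hh : h₀ ≠ 0) (hh2 : h₀ + h₀ = 0)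
    (a b : A) (ha : a + a ≠ 0) (hb : b + b ≠ 0) :
    orbHat ({0, a, -a, h₀} : Set A) = orbHat ({0, b, -b, h₀} : Set A) ↔
      b ∈ ({a, -a, h₀ + a, h₀ - a} : Set A) := by
  have hneg : -h₀ = h₀ := neg_eq_of_add_eq_zero_left hh2
  constructor
  · intro heq
    have hXb : ({0, b, -b, h₀} : Set A) ∈ orbHat ({0, a, -a, h₀} : Set A) := by
      rw [heq]
      exact ⟨0, Or.inl (by simp)⟩
    simp only [Set.mem_insert_iff, Set.mem_singleton_iff]
    rcases hXb with ⟨e, h | h⟩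
    · rw [Set.image_insert_eq, Set.image_insert_eq, Set.image_insert_eq,
        Set.image_singleton, zero_add] at h
      exact key_cases h₀ e a b hh hh2 ha hb h
    · rw [Set.image_insert_eq, Set.image_insert_eq, Set.image_insert_eq,
        Set.image_singleton, neg_zero, zero_add, hneg] at h
      have := key_cases h₀ e (-a) b hh hh2
        (fun H => ha (by rwa [← neg_add, neg_eq_zero] at H)) hb h
      rcases this with h' | h' | h' | h'
      · exact Or.inr (Or.inl h')
      · exact Or.inl (by rwa [neg_neg] at h')
      · exact Or.inr (Or.inr (Or.inr (by rw [h', sub_eq_add_neg])))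
      · exact Or.inr (Or.inr (Or.inl (by rw [h', sub_neg_eq_add])))
  · intro hbmem
    have himg : (fun x => x + h₀) '' ({0, a, -a, h₀} : Set A)
        = {h₀, a + h₀, -a + h₀, 0} := by
      rw [Set.image_insert_eq, Set.image_insert_eq, Set.image_insert_eq,
        Set.image_singleton, zero_add, hh2]
    have horb : orbHat ({h₀, a + h₀, -a + h₀, (0:A)} : Set A)
        = orbHat ({0, a, -a, h₀} : Set A) := by
      rw [← himg, orbHat_translate]
    simp only [Set.mem_insert_iff, Set.mem_singleton_iff] at hbmem
    rcases hbmem with hx | hx | hx | hx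
    · subst hx; rfl
    · subst hx
      refine congrArg orbHat ?_
      ext x
      simp only [Set.mem_insert_iff, Set.mem_singleton_iff, neg_neg]
      tauto
    · subst hx
      rw [← horb]
      refine congrArg orbHat ?_
      have e3 : -(h₀ + a) = -a + h₀ := by rw [neg_add_rev, hneg]
      rw [e3, add_comm h₀ a]
      ext x
      simp only [Set.mem_insert_iff, Set.mem_singleton_iff]
      tauto
    · subst hx
      rw [← horb]
      refine congrArg orbHat ?_
      have e3 : -(h₀ - a) = a + h₀ := by rw [neg_sub, sub_eq_add_neg, hneg]
      have e4 : h₀ - a = -a + h₀ := by rw [sub_eq_add_neg, add_comm]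
      rw [e3, e4]
      ext x
      simp only [Set.mem_insert_iff, Set.mem_singleton_iff]
      tauto
end

section
/- Let A be a finite abelian group whose order is not divisible by 3, let a ∈ A with 2a ≠ 0. Then the Â-orbit of {0, a, -a} has cardinality |A|. -/
variable {A : Type*}

theorem stmt_15 [AddCommGroup A] [Fintype A] (h3 : ¬ (3 ∣ Fintype.card A))
    (a : A) (ha : a + a ≠ 0) :
    (orbHat ({0, a, -a} : Set A)).ncard = Fintype.card A := by
  set X : Set A := {0, a, -a} with hX
  have ha0 : a ≠ 0 := by rintro rfl; simp at ha
  -- 3b = 0 implies b = 0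
  have h3a : ∀ b : A, b + b + b = 0 → b = 0 := by
    intro b hb
    have hsm : (3 : ℕ) • b = 0 := by
      rw [show (3:ℕ) = 2 + 1 from rfl, add_nsmul, two_nsmul, one_nsmul]; exact hb
    have h1 : addOrderOf b ∣ 3 := addOrderOf_dvd_iff_nsmul_eq_zero.2 hsm
    have h2 : addOrderOf b ∣ Fintype.card A := addOrderOf_dvd_card
    rcases (Nat.prime_three).eq_one_or_self_of_dvd _ h1 with h | h
    · exact AddMonoid.addOrderOf_eq_one_iff.1 h
    · exact absurd (h ▸ h2) h3
  -- negation fixes X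
  have hnegX : (fun x : A => -x) '' X = X := by
    simp only [hX, Set.image_insert_eq, Set.image_singleton, neg_zero, neg_neg]
    rw [Set.pair_comm]
  have hneg : ∀ e : A, (fun x : A => -x + e) '' X = (fun x => x + e) '' X := by
    intro e
    have hco : (fun x : A => -x + e) = (fun x => x + e) ∘ (fun x => -x) := rfl
    rw [hco, Set.image_comp, hnegX]
  -- translation fixing X forces e = 0
  have key : ∀ e : A, (fun x : A => x + e) '' X = X → e = 0 := by
    intro e he
    have h0 : e ∈ X := by
      rw [← he]; exact ⟨0, by simp [hX], by simp⟩
    have hae : a + e ∈ X := by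
      rw [← he]; exact ⟨a, by simp [hX], rfl⟩
    have hnae : -a + e ∈ X := by
      rw [← he]; exact ⟨-a, by simp [hX], rfl⟩
    simp only [hX, Set.mem_insert_iff, Set.mem_singleton_iff] at h0 hae hnae
    rcases h0 with h0 | h0 | h0
    · exact h0
    · rw [h0] at hae ⊢
      rcases hae with h | h | h
      · exact absurd h ha
      · exact add_eq_left.mp h
      · exact absurd (h3a a (eq_neg_iff_add_eq_zero.mp h)) ha0
    · rw [h0] at hnae ⊢
      rcases hnae with h | h | h
      · rw [← neg_add] at h
        exact absurd (neg_eq_zero.mp h) ha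
      · refine absurd (h3a a ?_) ha0
        rw [← neg_add] at h
        have h4 := eq_neg_iff_add_eq_zero.mp h.symm
        rwa [← add_assoc] at h4
      · rw [neg_eq_zero.mp (add_eq_left.mp h)]
        exact neg_zero
  -- injectivity
  have hinj : Function.Injective (fun e : A => (fun x : A => x + e) '' X) := by
    intro e1 e2 h
    simp only at h
    have h2 := congrArg (Set.image (fun x : A => x + (-e2))) h
    rw [← Set.image_comp, ← Set.image_comp] at h2
    have hL : (fun x : A => x + (e1 - e2)) '' X = X := by
      have : ((fun x : A => x + -e2) ∘ fun x => x + e2) = id := by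
        funext x; simp
      rw [this, Set.image_id] at h2
      rw [show (fun x : A => x + (e1 - e2)) = ((fun x : A => x + -e2) ∘ fun x => x + e1) by
        funext x; simp [sub_eq_add_neg, add_assoc]]
      exact h2
    have := key _ hL
    exact sub_eq_zero.1 this
  have horb : orbHat X = Set.range (fun e : A => (fun x : A => x + e) '' X) := by
    ext Y
    simp only [orbHat, Set.mem_setOf_eq, Set.mem_range]
    constructor
    · rintro ⟨e, h | h⟩
      · exact ⟨e, h.symm⟩
      · exact ⟨e, by rw [h, hneg e]⟩
    · rintro ⟨e, h⟩; exact ⟨e, Or.inl h.symm⟩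
  rw [horb, ← Nat.card_coe_set_eq, Nat.card_range_of_injective hinj,
    Nat.card_eq_fintype_card]
end

section
/- Let A be a finite abelian group of order v not divisible by 3, let h₀ ∈ A have order 2, and let a ∈ A with 2a ≠ 0. Then the Â-orbit of the 4-set {0, a, -a, h₀} has cardinality v/4 if 2a = h₀, and cardinality v otherwise. -/
variable {A : Type*}

theorem stmt_16 [AddCommGroup A] [Fintype A] [DecidableEq A] (h3 : ¬ (3 ∣ Fintype.card A))
    (h₀ : A) (hh : h₀ ≠ 0) (hh2 : h₀ + h₀ = 0)
    (a : A) (ha : a + a ≠ 0) :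
    (orbHat ({0, a, -a, h₀} : Set A)).ncard =
      if a + a = h₀ then Fintype.card A / 4 else Fintype.card A := by
  classical
  have ha0 : a ≠ 0 := by rintro rfl; simp at ha
  have h₀neg : -h₀ = h₀ := neg_eq_of_add_eq_zero_left hh2
  haveI hp : Fact (Nat.Prime 3) := ⟨by norm_num⟩
  have h3' : ∀ b : A, b + b + b = 0 → b = 0 := by
    intro b hb
    by_contra hbne
    have h3b : (3 : ℕ) • b = 0 := by
      rw [show (3 : ℕ) • b = b + b + b by abel]
      exact hb
    have hord : addOrderOf b = 3 := addOrderOf_eq_prime h3b hbne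
    exact h3 (hord ▸ addOrderOf_dvd_card)
  set X : Set A := {0, a, -a, h₀} with hX
  set f : A → Set A := fun e => (fun x => x + e) '' X with hf
  -- negation fixes X
  have hnegX : (fun x : A => -x) '' X = X := by
    rw [hX]
    ext x
    simp only [Set.image_insert_eq, Set.image_singleton, neg_zero, neg_neg, h₀neg,
      Set.mem_insert_iff, Set.mem_singleton_iff]
    tauto
  have horb : orbHat X = Set.range f := by
    have hneg : ∀ e : A, (fun x => -x + e) '' X = f e := by
      intro e
      have h1 : (fun x : A => -x + e) '' X = (fun x => x + e) '' ((fun x : A => -x) '' X) := by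
        rw [Set.image_image]
      rw [h1, hnegX]
    ext Y
    constructor
    · rintro ⟨e, h | h⟩
      · exact ⟨e, h.symm⟩
      · exact ⟨e, (h.trans (hneg e)).symm⟩
    · rintro ⟨e, h⟩
      exact ⟨e, Or.inl h.symm⟩
  have hstep : ∀ e e' : A, f e = f e' → ∀ x ∈ X, x + (e - e') ∈ X := by
    intro e e' hfe x hx
    have hx' : x + e ∈ f e' := by rw [← hfe]; exact ⟨x, hx, rfl⟩
    obtain ⟨y, hy, hye⟩ := hx'
    have hxy : x + (e - e') = y := by
      have h1 : y = x + e - e' := eq_sub_of_add_eq hye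
      rw [h1]; abel
    rw [hxy]; exact hy
  -- distinctness
  have hne1 : a ≠ 0 := ha0
  have hne2 : (-a : A) ≠ 0 := fun h => ha0 (neg_eq_zero.mp h)
  have hne3 : a ≠ -a := fun h => ha (add_eq_zero_iff_eq_neg.mpr h)
  have hne4 : a ≠ h₀ := fun h => ha (by rw [h]; exact hh2)
  have hne5 : -a ≠ h₀ := by
    intro h
    have h2 : a = h₀ := by
      have := congrArg Neg.neg h
      rwa [neg_neg, h₀neg] at this
    exact hne4 h2
  have hne6 : h₀ ≠ 0 := hh
  by_cases hc : a + a = h₀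
  · -- case 2a = h₀ : X is the cyclic subgroup generated by a
    rw [if_pos hc]
    have h4a : a + a + a + a = 0 := by
      have : a + a + (a + a) = 0 := by rw [hc]; exact hh2
      rw [← this]; abel
    have hnegaa : -a = a + a + a := by
      apply neg_eq_of_add_eq_zero_left
      exact h4a
    set H : AddSubgroup A := AddSubgroup.zmultiples a with hH
    have hHX : (H : Set A) = X := by
      ext x
      constructor
      · rintro ⟨z, rfl⟩
        have h4z : ((4 : ℤ)) • a = 0 := by
          rw [show ((4 : ℤ)) • a = a + a + a + a by abel]
          exact h4a
        have hmod : z • a = (z % 4) • a := by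
          have hzz : z = z / 4 * 4 + z % 4 := by omega
          calc z • a = (z / 4 * 4 + z % 4) • a := by rw [← hzz]
            _ = (z / 4) • ((4 : ℤ) • a) + (z % 4) • a := by rw [add_zsmul, mul_zsmul]
            _ = (z % 4) • a := by rw [h4z, smul_zero, zero_add]
        have hr : z % 4 = 0 ∨ z % 4 = 1 ∨ z % 4 = 2 ∨ z % 4 = 3 := by omega
        rw [hX]
        show z • a ∈ ({0, a, -a, h₀} : Set A)
        rw [hmod]
        rcases hr with h | h | h | h <;> rw [h]
        · exact Or.inl (zero_zsmul a)
        · exact Or.inr (Or.inl (one_zsmul a))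
        · refine Or.inr (Or.inr (Or.inr ?_))
          rw [two_zsmul, hc]
          exact rfl
        · refine Or.inr (Or.inr (Or.inl ?_))
          rw [show ((3 : ℤ)) • a = a + a + a by abel, ← hnegaa]
      · intro hx
        rw [hX] at hx
        rcases hx with h | h | h | h
        · rw [h]; exact zero_mem H
        · rw [h]; exact AddSubgroup.mem_zmultiples a
        · rw [h]; exact neg_mem (AddSubgroup.mem_zmultiples a)
        · rw [h, ← hc]; exact add_mem (AddSubgroup.mem_zmultiples a) (AddSubgroup.mem_zmultiples a)
    have hXcard : X.ncard = 4 := by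
      have m3 : (-a : A) ∉ ({h₀} : Set A) := by
        simp only [Set.mem_singleton_iff]; exact hne5
      have m2 : a ∉ ({-a, h₀} : Set A) := by
        simp only [Set.mem_insert_iff, Set.mem_singleton_iff]
        rintro (h | h); exacts [hne3 h, hne4 h]
      have m1 : (0 : A) ∉ ({a, -a, h₀} : Set A) := by
        simp only [Set.mem_insert_iff, Set.mem_singleton_iff]
        rintro (h | h | h); exacts [hne1 h.symm, hne2 h.symm, hne6 h.symm]
      rw [hX, Set.ncard_insert_of_notMem m1, Set.ncard_insert_of_notMem m2,
        Set.ncard_insert_of_notMem m3, Set.ncard_singleton]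
    have hcardH : Nat.card H = 4 := by
      have h1 : Nat.card H = (H : Set A).ncard := Nat.card_coe_set_eq _
      rw [h1, hHX, hXcard]
    have himg : ∀ e : A, f e = {y | y - e ∈ X} := by
      intro e; ext y
      constructor
      · rintro ⟨x, hx, rfl⟩
        simpa using hx
      · intro hy
        exact ⟨y - e, hy, sub_add_cancel y e⟩
    have key : ∀ e e' : A, f e = f e' ↔ e - e' ∈ H := by
      intro e e'
      constructor
      · intro hfe
        have h1 := hstep e e' hfe 0 (by rw [hX]; exact Or.inl rfl)
        rw [zero_add] at h1
        rw [← hHX] at h1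
        exact h1
      · intro hd
        rw [himg e, himg e']
        ext y
        simp only [Set.mem_setOf_eq]
        rw [← hHX]
        simp only [SetLike.mem_coe]
        constructor
        · intro h
          have h2 := add_mem h hd
          rwa [sub_add_sub_cancel] at h2
        · intro h
          have h2 := sub_mem h hd
          rwa [sub_sub_sub_cancel_right] at h2
    have hrel : ∀ e e' : A, e - e' ∈ H → -e + e' ∈ H := by
      intro e e' h
      have h2 := neg_mem h
      rwa [show -(e - e') = -e + e' by abel] at h2
    have hrel' : ∀ e e' : A, -e + e' ∈ H → e - e' ∈ H := by
      intro e e' h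
      have h2 := neg_mem h
      rwa [show -(-e + e') = e - e' by abel] at h2
    set φ : A ⧸ H → Set A := Quotient.lift f (fun e e' h => (key e e').mpr
      (hrel' e e' ((QuotientAddGroup.leftRel_apply).mp h))) with hφ
    have hφinj : Function.Injective φ := by
      intro q q' hqq
      obtain ⟨e, rfl⟩ := Quotient.exists_rep q
      obtain ⟨e', rfl⟩ := Quotient.exists_rep q'
      have hfe : f e = f e' := hqq
      exact Quotient.sound ((QuotientAddGroup.leftRel_apply).mpr (hrel e e' ((key e e').mp hfe)))
    have hrange : Set.range φ = Set.range f := by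
      ext Y
      constructor
      · rintro ⟨q, rfl⟩
        obtain ⟨e, rfl⟩ := Quotient.exists_rep q
        exact ⟨e, rfl⟩
      · rintro ⟨e, rfl⟩
        exact ⟨Quotient.mk _ e, rfl⟩
    rw [horb, ← hrange, ← Set.image_univ, Set.ncard_image_of_injective _ hφinj, Set.ncard_univ]
    have hidx := AddSubgroup.index_mul_card (H := H)
    have h2 : Nat.card (A ⧸ H) = H.index := (AddSubgroup.index_eq_card H).symm
    rw [hcardH, Nat.card_eq_fintype_card] at hidx
    rw [h2]
    omega
  · -- case 2a ≠ h₀ : translations act freely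
    rw [if_neg hc]
    have hinj : Function.Injective f := by
      intro e e' hfe
      have hdX : e - e' ∈ X := by
        have := hstep e e' hfe 0 (by rw [hX]; exact Or.inl rfl)
        rwa [zero_add] at this
      rw [hX] at hdX
      rcases hdX with h | h | h | h
      · exact sub_eq_zero.mp h
      · exfalso
        have h2 := hstep e e' hfe a (by rw [hX]; exact Or.inr (Or.inl rfl))
        rw [h, hX] at h2
        rcases h2 with h2 | h2 | h2 | h2
        · exact ha h2
        · exact ha0 (add_eq_right.mp h2)
        · have h3a : a + a + a = 0 := by rw [h2]; exact neg_add_cancel a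
          exact ha0 (h3' a h3a)
        · exact hc h2
      · exfalso
        have h2 := hstep e e' hfe (-a) (by rw [hX]; exact Or.inr (Or.inr (Or.inl rfl)))
        rw [h, hX] at h2
        rcases h2 with h2 | h2 | h2 | h2
        · have : a + a = 0 := by
            have := congrArg Neg.neg h2
            rwa [neg_add_rev, neg_neg, neg_zero] at this
          exact ha this
        · have h4 : a + a = -a := by
            have := congrArg Neg.neg h2
            rwa [neg_add_rev, neg_neg] at this
          have h3a : a + a + a = 0 := by rw [h4]; exact neg_add_cancel a
          exact ha0 (h3' a h3a)
        · exact hne2 (add_eq_right.mp h2)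
        · have h4 : a + a = -h₀ := by
            have := congrArg Neg.neg h2
            rwa [neg_add_rev, neg_neg] at this
          rw [h₀neg] at h4
          exact hc h4
      · exfalso
        have h2 := hstep e e' hfe a (by rw [hX]; exact Or.inr (Or.inl rfl))
        rw [h, hX] at h2
        rcases h2 with h2 | h2 | h2 | h2
        · have h4 : h₀ = -a := eq_neg_of_add_eq_zero_right h2
          have : a + a = 0 := by
            have h5 := hh2
            rw [h4] at h5
            have := congrArg Neg.neg h5
            rwa [neg_add_rev, neg_neg, neg_zero] at this
          exact ha this
        · exact hh (add_eq_left.mp h2)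
        · have h4 : a + (a + h₀) = a + -a := congrArg (a + ·) h2
          rw [add_neg_cancel, ← add_assoc] at h4
          have h5 : a + a = -h₀ := eq_neg_of_add_eq_zero_left h4
          rw [h₀neg] at h5
          exact hc h5
        · exact ha0 (add_eq_right.mp h2)
    rw [horb, ← Set.image_univ, Set.ncard_image_of_injective _ hinj, Set.ncard_univ,
      Nat.card_eq_fintype_card]
end

section
/- Let A be an abelian group and B = {0, a, b, c} a 4-element subset such that -B = B + e for some e ∈ A (i.e., B is symmetric). Then one of the following holds: (1) the Â-orbit of B contains a set of the form {0, x, y, x+y} for some x, y; (2) the Â-orbit of B contains a set {0, x, -x, h} with 2h = 0; or (3) all of a, b, c have order dividing 2. -/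
variable {A : Type*}

lemma helper1 [AddCommGroup A] (u v w : A) (h : u = v + w) :
    ∃ x y : A, ({0, x, y, x + y} : Set A) ∈ orbHat ({0, u, v, w} : Set A) := by
  refine ⟨v, w, ?_⟩
  have hs : ({0, v, w, v + w} : Set A) = {0, u, v, w} := by ext z; simp [h]; tauto
  rw [hs]; exact ⟨0, Or.inl (by simp)⟩

lemma helper0 [AddCommGroup A] (u v w : A) (h1 : u + u = 0) (h2 : w = -v) :
    ∃ x h : A, h + h = 0 ∧ ({0, x, -x, h} : Set A) ∈ orbHat ({0, u, v, w} : Set A) := by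
  refine ⟨v, u, h1, ?_⟩
  have hs : ({0, v, -v, u} : Set A) = {0, u, v, w} := by ext z; simp [h2]; tauto
  rw [hs]; exact ⟨0, Or.inl (by simp)⟩

lemma helper2 [AddCommGroup A] (u v w : A) (h1 : u = v + v) (h2 : u = w + w) :
    ∃ x h : A, h + h = 0 ∧ ({0, x, -x, h} : Set A) ∈ orbHat ({0, u, v, w} : Set A) := by
  refine ⟨v, w - v, ?_, -v, Or.inl ?_⟩
  · calc w - v + (w - v) = (w + w) - (v + v) := by abel
      _ = u - u := by rw [← h1, ← h2]
      _ = 0 := sub_self u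
  · ext z
    simp [Set.image_insert_eq, h1, sub_eq_add_neg]
    tauto

lemma flip1 [AddCommGroup A] {x y z : A} (h : -x + y = z) : y = x + z := by
  rw [← h]; abel

lemma card3le [AddCommGroup A] (x y z : A) : ({x, y, z} : Set A).ncard ≤ 3 := by
  refine le_trans (Set.ncard_insert_le _ _) ?_
  have := Set.ncard_insert_le y ({z} : Set A)
  simp [Set.ncard_singleton] at this ⊢
  omega

set_option maxHeartbeats 1000000 in
theorem stmt_17 [AddCommGroup A] (a b c : A)
    (hcard : ({0, a, b, c} : Set A).ncard = 4)
    (hsym : ∃ e : A, (fun x => -x) '' ({0, a, b, c} : Set A) =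
      (fun x => x + e) '' ({0, a, b, c} : Set A)) :
    (∃ x y : A, ({0, x, y, x + y} : Set A) ∈ orbHat ({0, a, b, c} : Set A)) ∨
    (∃ x h : A, h + h = 0 ∧ ({0, x, -x, h} : Set A) ∈ orbHat ({0, a, b, c} : Set A)) ∨
    (a + a = 0 ∧ b + b = 0 ∧ c + c = 0) := by
  obtain ⟨e, hsym⟩ := hsym
  have hne : ∀ x y z : A, ({0, a, b, c} : Set A) = {x, y, z} → False := by
    intro x y z h
    rw [h] at hcard
    have := card3le (A := A) x y z
    omega
  have ha0 : a ≠ 0 := fun h => hne 0 b c (by ext z; simp [h]; try tauto)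
  have hb0 : b ≠ 0 := fun h => hne 0 a c (by ext z; simp [h]; try tauto)
  have hc0 : c ≠ 0 := fun h => hne 0 a b (by ext z; simp [h]; try tauto)
  have hab : a ≠ b := fun h => hne 0 b c (by ext z; simp [h]; try tauto)
  have hac : a ≠ c := fun h => hne 0 b c (by ext z; simp [h]; try tauto)
  have hbc : b ≠ c := fun h => hne 0 a c (by ext z; simp [h]; try tauto)
  have hmem : ∀ x, x ∈ ({0, a, b, c} : Set A) → -x - e ∈ ({0, a, b, c} : Set A) := by
    intro x hx
    have h1 : -x ∈ (fun x => -x) '' ({0, a, b, c} : Set A) := ⟨x, hx, rfl⟩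
    rw [hsym] at h1
    obtain ⟨y, hy, hye⟩ := h1
    have : y = -x - e := eq_sub_of_add_eq hye
    exact this ▸ hy
  have he : -e ∈ ({0, a, b, c} : Set A) := by simpa using hmem 0 (by simp)
  simp only [Set.mem_insert_iff, Set.mem_singleton_iff] at he
  rcases he with he | he | he | he
  · -- e = 0, σ x = -x
    have he0 : e = 0 := by rwa [neg_eq_zero] at he
    subst he0
    have hma : -a ∈ ({0, a, b, c} : Set A) := by simpa using hmem a (by simp)
    simp only [Set.mem_insert_iff, Set.mem_singleton_iff] at hma
    rcases hma with h | h | h | h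
    · exact absurd (neg_eq_zero.mp h) ha0
    · -- -a = a
      have h2a : a + a = 0 := neg_eq_iff_add_eq_zero.mp h
      have hmb : -b ∈ ({0, a, b, c} : Set A) := by simpa using hmem b (by simp)
      simp only [Set.mem_insert_iff, Set.mem_singleton_iff] at hmb
      rcases hmb with h' | h' | h' | h'
      · exact absurd (neg_eq_zero.mp h') hb0
      · -- -b = a, then b = -a = a, contra
        have : b = a := by rw [← neg_neg b, h', h]
        exact absurd this.symm hab
      · -- -b = b
        have h2b : b + b = 0 := neg_eq_iff_add_eq_zero.mp h'
        have hmc : -c ∈ ({0, a, b, c} : Set A) := by simpa using hmem c (by simp)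
        simp only [Set.mem_insert_iff, Set.mem_singleton_iff] at hmc
        rcases hmc with h'' | h'' | h'' | h''
        · exact absurd (neg_eq_zero.mp h'') hc0
        · have : c = a := by rw [← neg_neg c, h'', h]
          exact absurd this.symm hac
        · have : c = b := by rw [← neg_neg c, h'', h']
          exact absurd this.symm hbc
        · exact Or.inr (Or.inr ⟨h2a, h2b, neg_eq_iff_add_eq_zero.mp h''⟩)
      · -- -b = c : B = {0, a, b, -b}, 2a = 0
        exact Or.inr (Or.inl (helper0 a b c h2a h'.symm))
    · -- -a = b : B = {0, a, -a, c}
      have hmc : -c ∈ ({0, a, b, c} : Set A) := by simpa using hmem c (by simp)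
      simp only [Set.mem_insert_iff, Set.mem_singleton_iff] at hmc
      rcases hmc with h'' | h'' | h'' | h''
      · exact absurd (neg_eq_zero.mp h'') hc0
      · -- -c = a, then c = -a = b contra
        have : c = b := by rw [← neg_neg c, h'', h]
        exact absurd this.symm hbc
      · -- -c = b = -a, so c = a contra
        have : c = a := by rw [← neg_neg c, h'', ← h, neg_neg]
        exact absurd this.symm hac
      · -- -c = c : case 2, x = a, h = c
        have h2c : c + c = 0 := neg_eq_iff_add_eq_zero.mp h''
        have := helper0 c a b h2c h.symm
        refine Or.inr (Or.inl ?_)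
        rwa [show ({0, c, a, b} : Set A) = {0, a, b, c} by ext z; simp; tauto] at this
    · -- -a = c : B = {0, a, b, -a}
      have hmb : -b ∈ ({0, a, b, c} : Set A) := by simpa using hmem b (by simp)
      simp only [Set.mem_insert_iff, Set.mem_singleton_iff] at hmb
      rcases hmb with h' | h' | h' | h'
      · exact absurd (neg_eq_zero.mp h') hb0
      · have : b = c := by rw [← neg_neg b, h', h]
        exact absurd this hbc
      · have h2b : b + b = 0 := neg_eq_iff_add_eq_zero.mp h'
        have := helper0 b a c h2b h.symm
        refine Or.inr (Or.inl ?_)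
        rwa [show ({0, b, a, c} : Set A) = {0, a, b, c} by ext z; simp; tauto] at this
      · -- -b = c = -a : b = a contra
        have : b = a := by rw [← neg_neg b, h', ← h, neg_neg]
        exact absurd this.symm hab
  · -- -e = a, σ x = -x + a
    have he2 : e = -a := by rw [← he, neg_neg]
    subst he2
    have hmb : -b + a ∈ ({0, a, b, c} : Set A) := by
      have := hmem b (by simp); simpa [sub_neg_eq_add] using this
    simp only [Set.mem_insert_iff, Set.mem_singleton_iff] at hmb
    rcases hmb with h | h | h | h
    · exact absurd (neg_add_eq_zero.mp h).symm hab
    · have : -b = 0 := by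
        have := h.trans (zero_add a).symm
        exact add_right_cancel this
      exact absurd (neg_eq_zero.mp this) hb0
    · -- -b + a = b : a = b + b
      have hab2 : a = b + b := flip1 h
      have hmc : -c + a ∈ ({0, a, b, c} : Set A) := by
        have := hmem c (by simp); simpa [sub_neg_eq_add] using this
      simp only [Set.mem_insert_iff, Set.mem_singleton_iff] at hmc
      rcases hmc with h' | h' | h' | h'
      · exact absurd (neg_add_eq_zero.mp h').symm hac
      · have : -c = 0 := by
          have := h'.trans (zero_add a).symm
          exact add_right_cancel this
        exact absurd (neg_eq_zero.mp this) hc0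
      · -- -c + a = b : a = b + c
        exact Or.inl (helper1 a b c ((flip1 h').trans (add_comm c b)))
      · -- -c + a = c : a = c + c
        have hac2 : a = c + c := flip1 h'
        exact Or.inr (Or.inl (helper2 a b c hab2 hac2))
    · -- -b + a = c : a = b + c
      exact Or.inl (helper1 a b c (flip1 h))
  · -- -e = b, σ x = -x + b
    have he2 : e = -b := by rw [← he, neg_neg]
    subst he2
    have hma : -a + b ∈ ({0, a, b, c} : Set A) := by
      have := hmem a (by simp); simpa [sub_neg_eq_add] using this
    simp only [Set.mem_insert_iff, Set.mem_singleton_iff] at hma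
    rcases hma with h | h | h | h
    · exact absurd (neg_add_eq_zero.mp h) hab
    · -- -a + b = a : b = a + a
      have hba2 : b = a + a := flip1 h
      have hmc : -c + b ∈ ({0, a, b, c} : Set A) := by
        have := hmem c (by simp); simpa [sub_neg_eq_add] using this
      simp only [Set.mem_insert_iff, Set.mem_singleton_iff] at hmc
      rcases hmc with h' | h' | h' | h'
      · exact absurd (neg_add_eq_zero.mp h').symm hbc
      · -- -c + b = a : b = a + c
        have hb' : b = a + c := (flip1 h').trans (add_comm c a)
        have := helper1 b a c hb'
        refine Or.inl ?_
        rwa [show ({0, b, a, c} : Set A) = {0, a, b, c} by ext z; simp; tauto] at this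
      · have : -c = 0 := by
          have := h'.trans (zero_add b).symm
          exact add_right_cancel this
        exact absurd (neg_eq_zero.mp this) hc0
      · -- -c + b = c : b = c + c
        have hbc2 : b = c + c := flip1 h'
        have := helper2 b a c hba2 hbc2
        refine Or.inr (Or.inl ?_)
        rwa [show ({0, b, a, c} : Set A) = {0, a, b, c} by ext z; simp; tauto] at this
    · have : -a = 0 := by
        have := h.trans (zero_add b).symm
        exact add_right_cancel this
      exact absurd (neg_eq_zero.mp this) ha0
    · -- -a + b = c : b = a + c
      have hb' : b = a + c := flip1 h
      have := helper1 b a c hb'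
      refine Or.inl ?_
      rwa [show ({0, b, a, c} : Set A) = {0, a, b, c} by ext z; simp; tauto] at this
  · -- -e = c, σ x = -x + c
    have he2 : e = -c := by rw [← he, neg_neg]
    subst he2
    have hma : -a + c ∈ ({0, a, b, c} : Set A) := by
      have := hmem a (by simp); simpa [sub_neg_eq_add] using this
    simp only [Set.mem_insert_iff, Set.mem_singleton_iff] at hma
    rcases hma with h | h | h | h
    · exact absurd (neg_add_eq_zero.mp h) hac
    · -- -a + c = a : c = a + a
      have hca2 : c = a + a := flip1 h
      have hmb : -b + c ∈ ({0, a, b, c} : Set A) := by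
        have := hmem b (by simp); simpa [sub_neg_eq_add] using this
      simp only [Set.mem_insert_iff, Set.mem_singleton_iff] at hmb
      rcases hmb with h' | h' | h' | h'
      · exact absurd (neg_add_eq_zero.mp h') hbc
      · -- -b + c = a : c = a + b
        have hc' : c = a + b := (flip1 h').trans (add_comm b a)
        have := helper1 c a b hc'
        refine Or.inl ?_
        rwa [show ({0, c, a, b} : Set A) = {0, a, b, c} by ext z; simp; tauto] at this
      · -- -b + c = b : c = b + b
        have hcb2 : c = b + b := flip1 h'
        have := helper2 c a b hca2 hcb2
        refine Or.inr (Or.inl ?_)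
        rwa [show ({0, c, a, b} : Set A) = {0, a, b, c} by ext z; simp; tauto] at this
      · have : -b = 0 := by
          have := h'.trans (zero_add c).symm
          exact add_right_cancel this
        exact absurd (neg_eq_zero.mp this) hb0
    · -- -a + c = b : c = a + b
      have hc' : c = a + b := flip1 h
      have := helper1 c a b hc'
      refine Or.inl ?_
      rwa [show ({0, c, a, b} : Set A) = {0, a, b, c} by ext z; simp; tauto] at this
    · have : -a = 0 := by
        have := h.trans (zero_add c).symm
        exact add_right_cancel this
      exact absurd (neg_eq_zero.mp this) ha0
end

section
/- Let A be a finite abelian group with cyclic Sylow 2-subgroup, and let a, b ∈ A such that the subgroup ⟨a, b⟩ generated by a and b is not cyclic. Then 2a ∉ ⟨b⟩ and 2b ∉ ⟨a⟩. -/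
/-- A finite commutative group whose Sylow subgroups are all cyclic is cyclic. -/
theorem aux_isCyclic_of_sylow {G : Type*} [CommGroup G] [Finite G]
    (h : ∀ (p : ℕ) (_ : Fact p.Prime) (P : Sylow p G), IsCyclic (P : Subgroup G)) :
    IsCyclic G := by
  apply IsCyclic.of_exponent_eq_card
  refine Nat.dvd_antisymm Group.exponent_dvd_nat_card ?_
  rw [← Nat.factorization_le_iff_dvd Nat.card_pos.ne' Monoid.exponent_ne_zero_of_finite,
    Finsupp.le_def]
  intro p
  by_cases hp : p.Prime
  · haveI hpf : Fact p.Prime := ⟨hp⟩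
    obtain ⟨P⟩ : Nonempty (Sylow p G) := inferInstance
    obtain ⟨g, hg⟩ := (h p hpf P).exists_ofOrder_eq_natCard
    rw [Sylow.card_eq_multiplicity] at hg
    have hdvd : p ^ (Nat.card G).factorization p ∣ Monoid.exponent G := by
      rw [← hg, ← Subgroup.orderOf_coe]
      exact Monoid.order_dvd_exponent _
    exact (Nat.Prime.pow_dvd_iff_le_factorization hp Monoid.exponent_ne_zero_of_finite).mp hdvd
  · simp [Nat.factorization_eq_zero_of_not_prime _ hp]

theorem aux_isAddCyclic_of_toSubgroup {A : Type*} [AddGroup A] (S : AddSubgroup A)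
    (h : IsCyclic (AddSubgroup.toSubgroup S)) : IsAddCyclic S := by
  obtain ⟨g, hg⟩ := h
  refine ⟨⟨Multiplicative.toAdd (g : Multiplicative A), g.2⟩, fun x ↦ ?_⟩
  obtain ⟨n, hn⟩ := hg ⟨Multiplicative.ofAdd (x : A), x.2⟩
  refine AddSubgroup.mem_zmultiples_iff.mpr ⟨n, ?_⟩
  apply Subtype.ext
  have := congrArg (fun y : AddSubgroup.toSubgroup S => Multiplicative.toAdd (y : Multiplicative A)) hn
  simpa using this

theorem aux_main {A : Type*} [AddCommGroup A] [Fintype A]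
    (hsyl : ∀ P : Sylow 2 (Multiplicative A), IsCyclic (P : Subgroup (Multiplicative A)))
    (a b : A) (h2a : a + a ∈ AddSubgroup.zmultiples b) :
    IsAddCyclic (AddSubgroup.closure ({a, b} : Set A)) := by
  set H : AddSubgroup A := AddSubgroup.closure ({a, b} : Set A) with hHdef
  set H' : Subgroup (Multiplicative A) := AddSubgroup.toSubgroup H with hH'def
  -- every element of H doubled lies in ⟨b⟩
  have key : ∀ x ∈ H, x + x ∈ AddSubgroup.zmultiples b := by
    intro x hx
    refine AddSubgroup.closure_induction
      (p := fun x _ => x + x ∈ AddSubgroup.zmultiples b) ?_ ?_ ?_ ?_ hx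
    · intro y hy
      rcases hy with rfl | hy
      · exact h2a
      · rcases hy with rfl
        exact add_mem (AddSubgroup.mem_zmultiples _) (AddSubgroup.mem_zmultiples _)
    · simpa using zero_mem (AddSubgroup.zmultiples b)
    · intro y z _ _ hy hz
      have hyz : y + z + (y + z) = (y + y) + (z + z) := by abel
      rw [hyz]; exact add_mem hy hz
    · intro y _ hy
      have hy' : -y + -y = -(y + y) := by abel
      rw [hy']; exact neg_mem hy
  -- the multiplicative copy of ⟨b⟩ is cyclic
  have hCcyc : IsCyclic (AddSubgroup.toSubgroup (AddSubgroup.zmultiples b)) := by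
    refine ⟨⟨Multiplicative.ofAdd b, AddSubgroup.mem_zmultiples b⟩, fun x ↦ ?_⟩
    have hx2 : Multiplicative.toAdd (x : Multiplicative A) ∈ AddSubgroup.zmultiples b := x.2
    obtain ⟨n, hn⟩ := AddSubgroup.mem_zmultiples_iff.mp hx2
    refine Subgroup.mem_zpowers_iff.mpr ⟨n, ?_⟩
    apply Subtype.ext
    have : Multiplicative.toAdd
        (((⟨Multiplicative.ofAdd b, AddSubgroup.mem_zmultiples b⟩ :
          AddSubgroup.toSubgroup (AddSubgroup.zmultiples b)) ^ n : _) : Multiplicative A)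
        = n • b := by
      push_cast
      simp
    apply Multiplicative.toAdd.injective
    rw [this, hn]
  -- H' is cyclic by the Sylow criterion
  have hcyc' : IsCyclic H' := by
    apply aux_isCyclic_of_sylow
    intro p hp P
    set Q : Subgroup (Multiplicative A) := Subgroup.map H'.subtype P.1 with hQdef
    have hQpg : IsPGroup p Q := P.2.map _
    have hQcyc : IsCyclic Q := by
      rcases eq_or_ne p 2 with rfl | hp2
      · obtain ⟨R, hR⟩ := hQpg.exists_le_sylow
        haveI := hsyl R
        exact Subgroup.isCyclic_of_le hR
      · have hle : Q ≤ AddSubgroup.toSubgroup (AddSubgroup.zmultiples b) := by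
          intro x hxQ
          have hxH' : x ∈ H' := by
            rcases hxQ with ⟨y, _, rfl⟩
            exact y.2
          -- x has odd order
          obtain ⟨k, hk⟩ := IsPGroup.iff_orderOf.mp hQpg ⟨x, hxQ⟩
          have hpow1 : (⟨x, hxQ⟩ : Q) ^ p ^ k = 1 := by
            rw [← hk]; exact pow_orderOf_eq_one _
          have hpow : x ^ p ^ k = 1 := by
            simpa using congrArg Subtype.val hpow1
          have hordx : orderOf x ∣ p ^ k := orderOf_dvd_of_pow_eq_one hpow
          have h2p : ¬ (2 ∣ p) := by
            intro hdvd
            exact hp2 ((Nat.prime_dvd_prime_iff_eq Nat.prime_two hp.out).mp hdvd).symm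
          have hco : (2 : ℕ).Coprime (orderOf x) :=
            Nat.Coprime.coprime_dvd_right hordx
              (((Nat.prime_two.coprime_iff_not_dvd).mpr h2p).pow_right k)
          obtain ⟨m, hm⟩ := exists_pow_eq_self_of_coprime hco
          have hx2 : x ^ 2 ∈ AddSubgroup.toSubgroup (AddSubgroup.zmultiples b) := by
            have hmem : Multiplicative.toAdd x + Multiplicative.toAdd x ∈
                AddSubgroup.zmultiples b := key (Multiplicative.toAdd x) hxH'
            have : x ^ 2 = x * x := sq x
            show Multiplicative.toAdd (x ^ 2) ∈ AddSubgroup.zmultiples b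
            rw [this]
            exact hmem
          rw [← hm]
          exact pow_mem hx2 m
        haveI := hCcyc
        exact Subgroup.isCyclic_of_le hle
    -- transfer back along the equivalence P.1 ≃* Q
    have e : (P.1 : Subgroup H') ≃* Q :=
      Subgroup.equivMapOfInjective P.1 H'.subtype H'.subtype_injective
    exact isCyclic_of_surjective e.symm e.symm.surjective
  exact aux_isAddCyclic_of_toSubgroup H hcyc'

theorem stmt_18 {A : Type*} [AddCommGroup A] [Fintype A]
    (hsyl : ∀ P : Sylow 2 (Multiplicative A), IsCyclic (P : Subgroup (Multiplicative A)))
    (a b : A) (hnc : ¬ IsAddCyclic (AddSubgroup.closure ({a, b} : Set A))) :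
    a + a ∉ AddSubgroup.zmultiples b ∧ b + b ∉ AddSubgroup.zmultiples a := by
  constructor
  · intro h2a
    exact hnc (aux_main hsyl a b h2a)
  · intro h2b
    rw [Set.pair_comm] at hnc
    exact hnc (aux_main hsyl b a h2b)
end

section
/- Let A be a finite abelian group with a unique element h₀ of order 2 (e.g., cyclic Sylow 2-subgroup), and let (A, ℬ) be a Steiner quadruple system on A such that ℬ is invariant under all translations x ↦ x + e and under negation x ↦ -x. Then for every a ∈ A with 2a ≠ 0, the quadruple {0, a, -a, h₀} belongs to ℬ. -/
theorem stmt_19 {A : Type*} [AddCommGroup A] [Fintype A]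
    (h₀ : A) (hh : h₀ ≠ 0) (hh2 : h₀ + h₀ = 0)
    (huniq : ∀ h : A, h ≠ 0 → h + h = 0 → h = h₀)
    (ℬ : Set (Set A))
    (hblk : ∀ B ∈ ℬ, B.ncard = 4)
    (hsqs : ∀ T : Set A, T.ncard = 3 → ∃! B, B ∈ ℬ ∧ T ⊆ B)
    (htrans : ∀ B ∈ ℬ, ∀ e : A, (fun x => x + e) '' B ∈ ℬ)
    (hneg : ∀ B ∈ ℬ, (fun x => -x) '' B ∈ ℬ) :
    ∀ a : A, a + a ≠ 0 → ({0, a, -a, h₀} : Set A) ∈ ℬ := by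
  intro a ha
  have ha0 : a ≠ 0 := by rintro rfl; simp at ha
  have hana : a ≠ -a := by
    intro h
    apply ha
    nth_rewrite 2 [h]
    simp
  set T : Set A := {0, a, -a} with hT
  have hT3 : T.ncard = 3 := by
    rw [Set.ncard_eq_three]
    exact ⟨0, a, -a, Ne.symm ha0, by simpa using ha0, hana, rfl⟩
  obtain ⟨B, ⟨hBℬ, hTB⟩, huB⟩ := hsqs T hT3
  have hB4 : B.ncard = 4 := hblk B hBℬ
  -- get a fourth element
  have hTne : T ≠ B := by
    intro h; rw [h, hB4] at hT3; omega
  have hss : T ⊂ B := ⟨hTB, fun h => hTne (le_antisymm hTB h)⟩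
  obtain ⟨x, hxB, hxT⟩ := Set.exists_of_ssubset hss
  have hBeq : B = {0, a, -a, x} := by
    have hsub : ({0, a, -a, x} : Set A) ⊆ B := by
      intro y hy
      rcases hy with h | h | h | h
      · exact hTB (by simp [hT, h])
      · exact hTB (by simp [hT, h])
      · exact hTB (by simp [hT, h])
      · rw [Set.mem_singleton_iff] at h; exact h ▸ hxB
    have hc : ({0, a, -a, x} : Set A).ncard = 4 := by
      have hx0 : x ≠ 0 := fun h => hxT (by simp [hT, h])
      have hxa : x ≠ a := fun h => hxT (by simp [hT, h])
      have hxna : x ≠ -a := fun h => hxT (by simp [hT, h])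
      rw [Set.ncard_insert_of_notMem (by simp [Ne.symm ha0, hx0.symm, (by simpa using ha0 : (0:A) ≠ -a)]) (Set.toFinite _),
        Set.ncard_insert_of_notMem (by simp [hana, hxa.symm]) (Set.toFinite _),
        Set.ncard_insert_of_notMem (by simp [hxna.symm]) (Set.toFinite _),
        Set.ncard_singleton]
    symm
    exact Set.eq_of_subset_of_ncard_le hsub (by rw [hB4, hc]) (Set.toFinite _)
  -- negation fixes B
  have hnB : (fun x => -x) '' B = B := by
    apply huB
    refine ⟨hneg B hBℬ, ?_⟩
    intro y hy
    rcases hy with h | h | h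
    · exact ⟨0, hTB (by simp [hT]), by simp [h]⟩
    · exact ⟨-a, hTB (by simp [hT]), by simp [h]⟩
    · rw [Set.mem_singleton_iff] at h; exact ⟨a, hTB (by simp [hT]), by simp [h]⟩
  have hnxB : -x ∈ B := by
    rw [← hnB]; exact ⟨x, hxB, rfl⟩
  rw [hBeq] at hnxB
  have hx0 : x ≠ 0 := fun h => hxT (by simp [hT, h])
  have hxh : x = h₀ := by
    rcases hnxB with h | h | h | h
    · exact absurd (by simpa using h : x = 0) hx0
    · exact absurd (by rw [← h]; simp : x = -a) (fun h => hxT (by simp [hT, h]))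
    · exact absurd (by have := neg_injective (h.trans rfl); simpa using this : x = a)
        (fun h => hxT (by simp [hT, h]))
    · exact huniq x hx0 (by rw [add_eq_zero_iff_neg_eq]; exact h)
  rw [hBeq, hxh] at hBℬ; exact hBℬ
end
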